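/- arXiv:quant-ph/0208020 — 5 statements merged into one kernel-verified Lean document; each statement's English description precedes it below -/
import Mathlib

section
/- Classical information-spectrum identity (equation J1 of Lemma 4): For any sequences p⃗ = {p_n} and q⃗ = {q_n} of probability distributions on finite sets Ω_n, B(p⃗‖q⃗) = D_lower(p⃗‖q⃗). -/
open scoped BigOperators Classical
open Filter

/-- The normalized log-likelihood ratio `c * log (pv / qv)` as an extended real number,
with the convention that it equals `+∞` when `qv = 0 < pv`. -/
noncomputable def llrE (c : ℝ) (pv qv : ℝ) : EReal :=
  if qv = 0 ∧ 0 < pv then ⊤ else ((c * Real.log (pv / qv) : ℝ) : EReal)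

lemma llrE_lt_iff (c lam pv qv : ℝ) :
    llrE c pv qv < (lam : EReal) ↔ ¬(qv = 0 ∧ 0 < pv) ∧ c * Real.log (pv / qv) < lam := by
  unfold llrE
  split_ifs with h
  · simp [h]
  · rw [EReal.coe_lt_coe_iff]; simp [h]

noncomputable def indT (c : Prop) (en : ℝ) : ℝ := min 1 (max (if c then 1 else 0) en)

lemma indT_nonneg (c : Prop) {en : ℝ} (h : 0 ≤ en) : 0 ≤ indT c en :=
  le_min zero_le_one (le_max_of_le_right h)

lemma indT_le_one (c : Prop) (en : ℝ) : indT c en ≤ 1 := min_le_left _ _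

lemma indT_eq_one {c : Prop} (hc : c) (en : ℝ) : indT c en = 1 := by
  simp only [indT, hc, if_true]
  exact min_eq_left (le_max_left _ _)

lemma indT_le_add (c : Prop) {en : ℝ} (h : 0 ≤ en) :
    indT c en ≤ (if c then 1 else 0) + en := by
  refine (min_le_right _ _).trans (max_le (le_add_of_nonneg_right h) ?_)
  refine le_add_of_nonneg_left ?_
  split_ifs <;> norm_num

lemma min_le_indT (c : Prop) (en : ℝ) : min 1 en ≤ indT c en :=
  min_le_min le_rfl (le_max_right _ _)

section
variable (Ω : ℕ → Type) [∀ n, Fintype (Ω n)] (p q : ∀ n : ℕ, Ω n → ℝ)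

lemma lemDB (hp0 : ∀ n ω, 0 ≤ p n ω) (hp1 : ∀ n, ∑ ω, p n ω = 1)
    (hq0 : ∀ n ω, 0 ≤ q n ω) (hq1 : ∀ n, ∑ ω, q n ω = 1) (lam : ℝ)
    (hD : Filter.Tendsto (fun n : ℕ => ∑ ω ∈ Finset.univ.filter
          (fun ω : Ω n => llrE (1 / (n : ℝ)) (p n ω) (q n ω) < (lam : EReal)), p n ω)
          Filter.atTop (nhds 0)) :
    ∃ T : ∀ n : ℕ, Ω n → ℝ,
        (∀ n ω, T n ω ∈ Set.Icc (0 : ℝ) 1) ∧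
        Filter.Tendsto (fun n : ℕ => ∑ ω, (1 - T n ω) * p n ω) Filter.atTop (nhds 0) ∧
        Filter.limsup (fun n : ℕ => (1 / (n : ℝ)) * Real.log (∑ ω, T n ω * q n ω))
          Filter.atTop ≤ -lam := by
  classical
  set e : ℕ → ℝ := fun n => Real.exp (-((n : ℝ) * lam)) with he
  have hepos : ∀ n, 0 < e n := fun n => Real.exp_pos _
  set C : ∀ n : ℕ, Ω n → Prop := fun n ω =>
    ¬ llrE (1 / (n : ℝ)) (p n ω) (q n ω) < (lam : EReal) ∧ 0 < p n ω with hC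
  refine ⟨fun n ω => indT (C n ω) (e n), ?_, ?_, ?_⟩
  · exact fun n ω => ⟨indT_nonneg _ (hepos n).le, indT_le_one _ _⟩
  · -- α part
    have h0 : ∀ n, 0 ≤ ∑ ω, (1 - indT (C n ω) (e n)) * p n ω := by
      intro n
      exact Finset.sum_nonneg fun ω _ =>
        mul_nonneg (by linarith [indT_le_one (C n ω) (e n)]) (hp0 n ω)
    have hle : ∀ n, (∑ ω, (1 - indT (C n ω) (e n)) * p n ω) ≤
        ∑ ω ∈ Finset.univ.filter
          (fun ω : Ω n => llrE (1 / (n : ℝ)) (p n ω) (q n ω) < (lam : EReal)), p n ω := by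
      intro n
      rw [Finset.sum_filter]
      apply Finset.sum_le_sum
      intro ω _
      by_cases hc : llrE (1 / (n : ℝ)) (p n ω) (q n ω) < (lam : EReal)
      · simp only [hc, if_true]
        calc (1 - indT (C n ω) (e n)) * p n ω ≤ 1 * p n ω :=
              mul_le_mul_of_nonneg_right
                (by linarith [indT_nonneg (C n ω) (hepos n).le]) (hp0 n ω)
          _ = p n ω := one_mul _
      · simp only [hc, if_false]
        by_cases hp : 0 < p n ω
        · rw [indT_eq_one ⟨hc, hp⟩]; simp
        · have : p n ω = 0 := le_antisymm (not_lt.1 hp) (hp0 n ω)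
          simp [this]
    exact tendsto_of_tendsto_of_tendsto_of_le_of_le tendsto_const_nhds hD h0 hle
  · -- β part
    set β : ℕ → ℝ := fun n => ∑ ω, indT (C n ω) (e n) * q n ω with hβ
    have hβlow : ∀ n, min 1 (e n) ≤ β n := by
      intro n
      have h : min 1 (e n) = ∑ ω, min 1 (e n) * q n ω := by
        rw [← Finset.mul_sum, hq1 n, mul_one]
      rw [h]
      exact Finset.sum_le_sum fun ω _ =>
        mul_le_mul_of_nonneg_right (min_le_indT _ _) (hq0 n ω)
    have hβpos : ∀ n, 0 < β n := fun n =>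
      lt_of_lt_of_le (lt_min one_pos (hepos n)) (hβlow n)
    have hβup : ∀ n : ℕ, 1 ≤ n → β n ≤ 2 * e n := by
      intro n hn
      have hn0 : (0 : ℝ) < n := by exact_mod_cast hn
      have key : ∀ ω : Ω n, C n ω → q n ω ≤ e n * p n ω := by
        intro ω hcω
        obtain ⟨hnlt, hp⟩ := hcω
        rcases eq_or_lt_of_le (hq0 n ω) with hq | hq
        · rw [← hq]; positivity
        · rw [llrE_lt_iff] at hnlt
          push_neg at hnlt
          have hlam : lam ≤ 1 / (n : ℝ) * Real.log (p n ω / q n ω) :=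
            hnlt (fun h0 => absurd h0 hq.ne')
          have hlog : (n : ℝ) * lam ≤ Real.log (p n ω / q n ω) := by
            have := mul_le_mul_of_nonneg_left hlam hn0.le
            rwa [show (n : ℝ) * (1 / (n : ℝ) * Real.log (p n ω / q n ω))
              = Real.log (p n ω / q n ω) by field_simp] at this
          have hdiv : Real.exp ((n : ℝ) * lam) ≤ p n ω / q n ω := by
            rw [← Real.exp_log (div_pos hp hq)]
            exact Real.exp_le_exp.2 hlog
          have hple : Real.exp ((n : ℝ) * lam) * q n ω ≤ p n ω :=
            (le_div_iff₀ hq).1 hdiv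
          have := mul_le_mul_of_nonneg_left hple (hepos n).le
          calc q n ω = e n * (Real.exp ((n : ℝ) * lam) * q n ω) := by
                rw [he]; simp only [← mul_assoc, ← Real.exp_add]
                simp
            _ ≤ e n * p n ω := this
      have step : ∀ ω : Ω n, indT (C n ω) (e n) * q n ω ≤
          (if C n ω then q n ω else 0) + e n * q n ω := by
        intro ω
        by_cases hc : C n ω
        · rw [if_pos hc]
          have h1 : indT (C n ω) (e n) * q n ω ≤ 1 * q n ω :=
            mul_le_mul_of_nonneg_right (indT_le_one _ _) (hq0 n ω)
          have h2 : 0 ≤ e n * q n ω := mul_nonneg (hepos n).le (hq0 n ω)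
          rw [one_mul] at h1
          linarith
        · rw [if_neg hc, zero_add]
          have h1 : indT (C n ω) (e n) ≤ e n := by
            simp only [indT, if_neg hc]
            exact (min_le_right _ _).trans (max_le (hepos n).le le_rfl)
          exact mul_le_mul_of_nonneg_right h1 (hq0 n ω)
      calc β n ≤ ∑ ω, ((if C n ω then q n ω else 0) + e n * q n ω) :=
            Finset.sum_le_sum fun ω _ => step ω
        _ = (∑ ω ∈ Finset.univ.filter (C n), q n ω) + e n := by
            rw [Finset.sum_add_distrib, ← Finset.mul_sum, hq1 n, mul_one, Finset.sum_filter]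
        _ ≤ e n + e n := by
            have h1 : (∑ ω ∈ Finset.univ.filter (C n), q n ω)
                ≤ ∑ ω ∈ Finset.univ.filter (C n), e n * p n ω :=
              Finset.sum_le_sum fun ω hω => key ω (Finset.mem_filter.1 hω).2
            have h2 : (∑ ω ∈ Finset.univ.filter (C n), e n * p n ω) ≤ e n := by
              rw [← Finset.mul_sum]
              calc e n * ∑ ω ∈ Finset.univ.filter (C n), p n ω
                  ≤ e n * ∑ ω, p n ω := by
                    apply mul_le_mul_of_nonneg_left ?_ (hepos n).le
                    exact Finset.sum_le_sum_of_subset_of_nonneg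
                      (Finset.filter_subset _ _) (fun ω _ _ => hp0 n ω)
                _ = e n := by rw [hp1 n, mul_one]
            linarith
        _ = 2 * e n := by ring
    -- coboundedness
    have hco : IsCoboundedUnder (· ≤ ·) atTop
        (fun n : ℕ => (1 / (n : ℝ)) * Real.log (β n)) := by
      apply isCoboundedUnder_le_of_eventually_le atTop (x := min 0 (-lam))
      filter_upwards [eventually_ge_atTop 1] with n hn
      have hn0 : (0 : ℝ) < n := by exact_mod_cast hn
      have h1 : Real.exp (min 0 (-((n : ℝ) * lam))) ≤ β n := by
        have : Real.exp (min 0 (-((n : ℝ) * lam))) = min 1 (e n) := by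
          rw [Real.exp_monotone.map_min, Real.exp_zero]
        rw [this]; exact hβlow n
      have h2 : min 0 (-((n : ℝ) * lam)) ≤ Real.log (β n) :=
        (Real.le_log_iff_exp_le (hβpos n)).2 h1
      calc min 0 (-lam) = (1 / (n : ℝ)) * min 0 (-((n : ℝ) * lam)) := by
            rcases le_total 0 lam with h | h
            · rw [min_eq_right (by linarith : -lam ≤ (0:ℝ)),
                min_eq_right (by nlinarith : -((n : ℝ) * lam) ≤ 0)]
              field_simp
            · rw [min_eq_left (by linarith : (0:ℝ) ≤ -lam),
                min_eq_left (by nlinarith : (0:ℝ) ≤ -((n : ℝ) * lam))]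
              simp
        _ ≤ (1 / (n : ℝ)) * Real.log (β n) :=
            mul_le_mul_of_nonneg_left h2 (by positivity)
    -- conclude limsup bound
    refine le_of_forall_pos_le_add fun ε hε => ?_
    apply limsup_le_of_le hco
    have h2 : Tendsto (fun n : ℕ => Real.log 2 / (n : ℝ)) atTop (nhds 0) :=
      tendsto_const_div_atTop_nhds_zero_nat _
    filter_upwards [eventually_ge_atTop 1, h2.eventually_lt_const hε] with n hn hlt
    have hn0 : (0 : ℝ) < n := by exact_mod_cast hn
    have hlog : Real.log (β n) ≤ Real.log 2 + (-((n : ℝ) * lam)) := by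
      calc Real.log (β n) ≤ Real.log (2 * e n) :=
            Real.log_le_log (hβpos n) (hβup n hn)
        _ = Real.log 2 + (-((n : ℝ) * lam)) := by
            rw [Real.log_mul two_ne_zero (Real.exp_ne_zero _), Real.log_exp]
    calc (1 / (n : ℝ)) * Real.log (β n)
        ≤ (1 / (n : ℝ)) * (Real.log 2 + (-((n : ℝ) * lam))) :=
          mul_le_mul_of_nonneg_left hlog (by positivity)
      _ = Real.log 2 / (n : ℝ) - lam := by field_simp; ring
      _ ≤ -lam + ε := by linarith


lemma lemBD (hp0 : ∀ n ω, 0 ≤ p n ω) (hp1 : ∀ n, ∑ ω, p n ω = 1)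
    (hq0 : ∀ n ω, 0 ≤ q n ω) (hq1 : ∀ n, ∑ ω, q n ω = 1) (lam ε : ℝ) (hε : 0 < ε)
    (T : ∀ n : ℕ, Ω n → ℝ) (h01 : ∀ n ω, T n ω ∈ Set.Icc (0 : ℝ) 1)
    (hα : Filter.Tendsto (fun n : ℕ => ∑ ω, (1 - T n ω) * p n ω) Filter.atTop (nhds 0))
    (hβ : Filter.limsup (fun n : ℕ => (1 / (n : ℝ)) * Real.log (∑ ω, T n ω * q n ω))
          Filter.atTop ≤ -lam) :
    Filter.Tendsto (fun n : ℕ => ∑ ω ∈ Finset.univ.filter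
      (fun ω : Ω n => llrE (1 / (n : ℝ)) (p n ω) (q n ω) < ((lam - ε : ℝ) : EReal)), p n ω)
      Filter.atTop (nhds 0) := by
  classical
  set β : ℕ → ℝ := fun n => ∑ ω, T n ω * q n ω with hβdef
  have hβ0 : ∀ n, 0 ≤ β n := fun n =>
    Finset.sum_nonneg fun ω _ => mul_nonneg (h01 n ω).1 (hq0 n ω)
  have hβ1 : ∀ n, β n ≤ 1 := by
    intro n
    calc β n ≤ ∑ ω, q n ω :=
          Finset.sum_le_sum fun ω _ => by
            calc T n ω * q n ω ≤ 1 * q n ω :=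
                  mul_le_mul_of_nonneg_right (h01 n ω).2 (hq0 n ω)
              _ = q n ω := one_mul _
      _ = 1 := hq1 n
  have hbb : IsBoundedUnder (· ≤ ·) atTop (fun n : ℕ => (1 / (n : ℝ)) * Real.log (β n)) := by
    refine isBoundedUnder_of ⟨0, fun n => ?_⟩
    have h1 : Real.log (β n) ≤ 0 := Real.log_nonpos (hβ0 n) (hβ1 n)
    have h2 : (0:ℝ) ≤ 1 / (n : ℝ) := by positivity
    calc (1 / (n : ℝ)) * Real.log (β n) ≤ (1 / (n : ℝ)) * 0 :=
          mul_le_mul_of_nonneg_left h1 h2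
      _ = 0 := mul_zero _
  have hev : ∀ᶠ n : ℕ in atTop, (1 / (n : ℝ)) * Real.log (β n) < -lam + ε / 2 :=
    eventually_lt_of_limsup_lt (lt_of_le_of_lt hβ (by linarith)) hbb
  have hexp1 : Real.exp (-(ε / 2)) < 1 := by
    rw [Real.exp_lt_one_iff]; linarith
  have htendsR : Filter.Tendsto
      (fun n : ℕ => (∑ ω, (1 - T n ω) * p n ω) + (Real.exp (-(ε / 2))) ^ n)
      Filter.atTop (nhds 0) := by
    have := hα.add (tendsto_pow_atTop_nhds_zero_of_lt_one (Real.exp_pos _).le hexp1)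
    simpa using this
  refine tendsto_of_tendsto_of_tendsto_of_le_of_le' tendsto_const_nhds htendsR
    (Filter.Eventually.of_forall fun n => Finset.sum_nonneg fun ω _ => hp0 n ω) ?_
  filter_upwards [eventually_ge_atTop 1, hev] with n hn hfn
  have hn0 : (0 : ℝ) < n := by exact_mod_cast hn
  -- bound on β n
  have hβe : β n ≤ Real.exp ((n : ℝ) * (-lam + ε / 2)) := by
    rcases eq_or_lt_of_le (hβ0 n) with h0 | h0
    · rw [← h0]; positivity
    · have hlt : Real.log (β n) < (n : ℝ) * (-lam + ε / 2) := by
        have h1 : Real.log (β n) = (n : ℝ) * ((1 / (n : ℝ)) * Real.log (β n)) := by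
          field_simp
        rw [h1]
        exact mul_lt_mul_of_pos_left hfn hn0
      exact ((Real.log_lt_iff_lt_exp h0).1 hlt).le
  -- key per-term bound on the filter set
  set F : Finset (Ω n) := Finset.univ.filter
    (fun ω : Ω n => llrE (1 / (n : ℝ)) (p n ω) (q n ω) < ((lam - ε : ℝ) : EReal)) with hF
  have key2 : ∀ ω ∈ F, T n ω * p n ω ≤
      Real.exp ((n : ℝ) * (lam - ε)) * (T n ω * q n ω) := by
    intro ω hω
    have hcond := (Finset.mem_filter.1 hω).2
    rw [llrE_lt_iff] at hcond
    obtain ⟨hne, hlt⟩ := hcond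
    rcases eq_or_lt_of_le (hp0 n ω) with hp | hp
    · rw [← hp, mul_zero]
      exact mul_nonneg (Real.exp_pos _).le (mul_nonneg (h01 n ω).1 (hq0 n ω))
    · have hq : 0 < q n ω := by
        rcases eq_or_lt_of_le (hq0 n ω) with h | h
        · exact absurd ⟨h.symm, hp⟩ hne
        · exact h
      have hloglt : Real.log (p n ω / q n ω) < (n : ℝ) * (lam - ε) := by
        have h1 : Real.log (p n ω / q n ω)
            = (n : ℝ) * ((1 / (n : ℝ)) * Real.log (p n ω / q n ω)) := by field_simp
        rw [h1]
        exact mul_lt_mul_of_pos_left hlt hn0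
      have hdlt : p n ω / q n ω < Real.exp ((n : ℝ) * (lam - ε)) :=
        (Real.log_lt_iff_lt_exp (div_pos hp hq)).1 hloglt
      have hpq : p n ω ≤ Real.exp ((n : ℝ) * (lam - ε)) * q n ω := by
        rw [div_lt_iff₀ hq] at hdlt
        linarith
      calc T n ω * p n ω ≤ T n ω * (Real.exp ((n : ℝ) * (lam - ε)) * q n ω) :=
            mul_le_mul_of_nonneg_left hpq (h01 n ω).1
        _ = Real.exp ((n : ℝ) * (lam - ε)) * (T n ω * q n ω) := by ring
  have hsplit : (∑ ω ∈ F, p n ω) ≤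
      (∑ ω, (1 - T n ω) * p n ω) + Real.exp ((n : ℝ) * (lam - ε)) * β n := by
    have h1 : (∑ ω ∈ F, p n ω)
        = (∑ ω ∈ F, (1 - T n ω) * p n ω) + ∑ ω ∈ F, T n ω * p n ω := by
      rw [← Finset.sum_add_distrib]
      exact Finset.sum_congr rfl fun ω _ => by ring
    have h2 : (∑ ω ∈ F, (1 - T n ω) * p n ω) ≤ ∑ ω, (1 - T n ω) * p n ω :=
      Finset.sum_le_sum_of_subset_of_nonneg (Finset.filter_subset _ _)
        (fun ω _ _ => mul_nonneg (by linarith [(h01 n ω).2]) (hp0 n ω))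
    have h3 : (∑ ω ∈ F, T n ω * p n ω) ≤ Real.exp ((n : ℝ) * (lam - ε)) * β n := by
      calc (∑ ω ∈ F, T n ω * p n ω)
          ≤ ∑ ω ∈ F, Real.exp ((n : ℝ) * (lam - ε)) * (T n ω * q n ω) :=
            Finset.sum_le_sum key2
        _ = Real.exp ((n : ℝ) * (lam - ε)) * ∑ ω ∈ F, T n ω * q n ω :=
            (Finset.mul_sum _ _ _).symm
        _ ≤ Real.exp ((n : ℝ) * (lam - ε)) * β n := by
            apply mul_le_mul_of_nonneg_left ?_ (Real.exp_pos _).le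
            exact Finset.sum_le_sum_of_subset_of_nonneg (Finset.filter_subset _ _)
              (fun ω _ _ => mul_nonneg (h01 n ω).1 (hq0 n ω))
    linarith
  have hfinal : Real.exp ((n : ℝ) * (lam - ε)) * β n ≤ (Real.exp (-(ε / 2))) ^ n := by
    calc Real.exp ((n : ℝ) * (lam - ε)) * β n
        ≤ Real.exp ((n : ℝ) * (lam - ε)) * Real.exp ((n : ℝ) * (-lam + ε / 2)) :=
          mul_le_mul_of_nonneg_left hβe (Real.exp_pos _).le
      _ = Real.exp ((n : ℝ) * (-(ε / 2))) := by
          rw [← Real.exp_add]; congr 1; ring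
      _ = (Real.exp (-(ε / 2))) ^ n := Real.exp_nat_mul _ n
  calc (∑ ω ∈ F, p n ω)
      ≤ (∑ ω, (1 - T n ω) * p n ω) + Real.exp ((n : ℝ) * (lam - ε)) * β n := hsplit
    _ ≤ (∑ ω, (1 - T n ω) * p n ω) + (Real.exp (-(ε / 2))) ^ n := by linarith

end

/-- **Classical information-spectrum identity (J1 of Lemma 4).** `B(p⃗‖q⃗) = D_lower(p⃗‖q⃗)`
for arbitrary sequences of probability distributions on finite sets. -/
theorem stmt_6 (Ω : ℕ → Type) [∀ n, Fintype (Ω n)]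
    (p q : ∀ n : ℕ, Ω n → ℝ)
    (hp0 : ∀ n ω, 0 ≤ p n ω) (hp1 : ∀ n, ∑ ω, p n ω = 1)
    (hq0 : ∀ n ω, 0 ≤ q n ω) (hq1 : ∀ n, ∑ ω, q n ω = 1) :
    sSup {lam : ℝ | ∃ T : ∀ n : ℕ, Ω n → ℝ,
        (∀ n ω, T n ω ∈ Set.Icc (0 : ℝ) 1) ∧
        Filter.Tendsto (fun n : ℕ => ∑ ω, (1 - T n ω) * p n ω) Filter.atTop (nhds 0) ∧
        Filter.limsup (fun n : ℕ => (1 / (n : ℝ)) * Real.log (∑ ω, T n ω * q n ω))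
          Filter.atTop ≤ -lam}
    = sSup {lam : ℝ | Filter.Tendsto
        (fun n : ℕ => ∑ ω ∈ Finset.univ.filter
          (fun ω : Ω n => llrE (1 / (n : ℝ)) (p n ω) (q n ω) < (lam : EReal)), p n ω)
        Filter.atTop (nhds 0)} := by
  classical
  set A : Set ℝ := {lam : ℝ | ∃ T : ∀ n : ℕ, Ω n → ℝ,
        (∀ n ω, T n ω ∈ Set.Icc (0 : ℝ) 1) ∧
        Filter.Tendsto (fun n : ℕ => ∑ ω, (1 - T n ω) * p n ω) Filter.atTop (nhds 0) ∧
        Filter.limsup (fun n : ℕ => (1 / (n : ℝ)) * Real.log (∑ ω, T n ω * q n ω))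
          Filter.atTop ≤ -lam} with hAdef
  set D : Set ℝ := {lam : ℝ | Filter.Tendsto
        (fun n : ℕ => ∑ ω ∈ Finset.univ.filter
          (fun ω : Ω n => llrE (1 / (n : ℝ)) (p n ω) (q n ω) < (lam : EReal)), p n ω)
        Filter.atTop (nhds 0)} with hDdef
  have hDA : D ⊆ A := fun lam hlam => lemDB Ω p q hp0 hp1 hq0 hq1 lam hlam
  have hsub : ∀ lam ∈ A, ∀ ε : ℝ, 0 < ε → lam - ε ∈ D := by
    rintro lam ⟨T, h01, hα, hβ⟩ ε hε
    exact lemBD Ω p q hp0 hp1 hq0 hq1 lam ε hε T h01 hα hβ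
  have hA0 : (0 : ℝ) ∈ A := by
    refine ⟨fun _ _ => 1, fun n ω => ⟨zero_le_one, le_rfl⟩, ?_, ?_⟩
    · simpa using (tendsto_const_nhds : Filter.Tendsto (fun _ : ℕ => (0:ℝ)) _ _)
    · have h : (fun n : ℕ => (1 / (n : ℝ)) * Real.log (∑ ω, (1:ℝ) * q n ω))
          = fun _ : ℕ => (0 : ℝ) := by
        funext n
        rw [show (∑ ω, (1:ℝ) * q n ω) = 1 by simpa using hq1 n, Real.log_one, mul_zero]
      rw [h, Filter.limsup_const, neg_zero]
  have hAne : A.Nonempty := ⟨0, hA0⟩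
  have hDne : D.Nonempty := ⟨0 - 1, hsub 0 hA0 1 one_pos⟩
  by_cases hbdd : BddAbove A
  · apply le_antisymm
    · have hDbdd : BddAbove D := hbdd.mono hDA
      apply csSup_le hAne
      intro lam hlam
      refine le_of_forall_pos_le_add fun ε hε => ?_
      have h1 : lam - ε ≤ sSup D := le_csSup hDbdd (hsub lam hlam ε hε)
      linarith
    · exact csSup_le_csSup hbdd hDne hDA
  · have hDbdd : ¬ BddAbove D := by
      rintro ⟨M, hM⟩
      apply hbdd
      refine ⟨M + 1, fun lam hlam => ?_⟩
      have := hM (hsub lam hlam 1 one_pos)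
      linarith
    rw [Real.sSup_of_not_bddAbove hbdd, Real.sSup_of_not_bddAbove hDbdd]
end

section
/- Classical information-spectrum identity (equation J2 of Lemma 4): For any sequences p⃗ = {p_n} and q⃗ = {q_n} of probability distributions on finite sets Ω_n, B†(p⃗‖q⃗) = D_upper(p⃗‖q⃗). -/
open scoped BigOperators Classical
open Filter

lemma exp_neg_nat_tendsto (c : ℝ) (hc : 0 < c) :
    Tendsto (fun n : ℕ => Real.exp (-((n : ℝ) * c))) atTop (nhds 0) := by
  have h : ∀ n : ℕ, Real.exp (-((n:ℝ) * c)) = (Real.exp (-c))^n := by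
    intro n; rw [← Real.exp_nat_mul]; ring_nf
  simp only [h]
  exact tendsto_pow_atTop_nhds_zero_of_lt_one (Real.exp_nonneg _)
    (Real.exp_lt_one_iff.2 (by linarith))

lemma llr_le_exp {n : ℕ} (hn : 1 ≤ n) {μ pv qv : ℝ} (hpv : 0 ≤ pv) (hqv : 0 ≤ qv)
    (h : ¬ ((μ : EReal) < llrE (1 / (n:ℝ)) pv qv)) :
    pv ≤ Real.exp ((n:ℝ) * μ) * qv := by
  have hn0 : (0:ℝ) < (n:ℝ) := by exact_mod_cast hn
  unfold llrE at h
  by_cases htop : qv = 0 ∧ 0 < pv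
  · rw [if_pos htop] at h
    exact absurd (EReal.coe_lt_top μ) h
  · rw [if_neg htop] at h
    have hx : (1/(n:ℝ)) * Real.log (pv/qv) ≤ μ := by exact_mod_cast not_lt.1 h
    have hlog : Real.log (pv/qv) ≤ (n:ℝ) * μ := by
      have := mul_le_mul_of_nonneg_left hx (le_of_lt hn0)
      calc Real.log (pv/qv) = (n:ℝ) * ((1/(n:ℝ)) * Real.log (pv/qv)) := by
            field_simp
        _ ≤ (n:ℝ) * μ := this
    rcases eq_or_lt_of_le hqv with hq | hq
    · have hp : pv = 0 := by
        by_contra hp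
        exact htop ⟨hq.symm, lt_of_le_of_ne hpv (Ne.symm hp)⟩
      simp [hp, ← hq]
    · rcases eq_or_lt_of_le hpv with hp | hp
      · rw [← hp]; positivity
      · have hdiv : 0 < pv / qv := div_pos hp hq
        have := (Real.log_le_iff_le_exp hdiv).1 hlog
        calc pv = (pv / qv) * qv := by field_simp
          _ ≤ Real.exp ((n:ℝ)*μ) * qv := mul_le_mul_of_nonneg_right this (le_of_lt hq)

lemma llr_ge_exp {n : ℕ} (hn : 1 ≤ n) {μ pv qv : ℝ} (hμ : 0 < μ) (hpv : 0 ≤ pv) (hqv : 0 ≤ qv)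
    (h : (μ : EReal) < llrE (1/(n:ℝ)) pv qv) :
    qv ≤ Real.exp (-((n:ℝ) * μ)) * pv := by
  have hn0 : (0:ℝ) < (n:ℝ) := by exact_mod_cast hn
  rcases eq_or_lt_of_le hqv with hq | hq
  · rw [← hq]; positivity
  · unfold llrE at h
    rw [if_neg (by rintro ⟨h0, -⟩; exact absurd h0 (ne_of_gt hq))] at h
    have hx : μ < (1/(n:ℝ)) * Real.log (pv/qv) := by exact_mod_cast h
    have hlog : (n:ℝ) * μ < Real.log (pv/qv) := by
      have := mul_lt_mul_of_pos_left hx hn0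
      calc (n:ℝ) * μ < (n:ℝ) * ((1/(n:ℝ)) * Real.log (pv/qv)) := this
        _ = Real.log (pv/qv) := by field_simp
    rcases eq_or_lt_of_le hpv with hp | hp
    · exfalso
      rw [← hp] at hlog
      simp [Real.log_zero] at hlog
      nlinarith
    · have hdiv : 0 < pv / qv := div_pos hp hq
      have := (Real.lt_log_iff_exp_lt hdiv).1 hlog
      have h2 : qv * Real.exp ((n:ℝ)*μ) ≤ pv := by
        rw [mul_comm]
        calc Real.exp ((n:ℝ)*μ) * qv ≤ (pv/qv) * qv :=
              mul_le_mul_of_nonneg_right this.le (le_of_lt hq)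
          _ = pv := by field_simp
      rw [Real.exp_neg, inv_mul_eq_div, le_div_iff₀ (Real.exp_pos _)]
      linarith

lemma achieve (Ω : ℕ → Type) [∀ n, Fintype (Ω n)]
    (p q : ∀ n : ℕ, Ω n → ℝ)
    (hp0 : ∀ n ω, 0 ≤ p n ω) (hp1 : ∀ n, ∑ ω, p n ω = 1)
    (hq0 : ∀ n ω, 0 ≤ q n ω) (hq1 : ∀ n, ∑ ω, q n ω = 1)
    (mu : ℝ)
    (hmu : ¬ Filter.Tendsto (fun n : ℕ => ∑ ω ∈ Finset.univ.filter
          (fun ω : Ω n => (mu : EReal) < llrE (1 / (n : ℝ)) (p n ω) (q n ω)), p n ω)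
        Filter.atTop (nhds 0)) :
    ∃ T : ∀ n : ℕ, Ω n → ℝ,
        (∀ n ω, T n ω ∈ Set.Icc (0 : ℝ) 1) ∧
        Filter.liminf (fun n : ℕ => ∑ ω, (1 - T n ω) * p n ω) Filter.atTop < 1 ∧
        Filter.limsup (fun n : ℕ => (1 / (n : ℝ)) * Real.log (∑ ω, T n ω * q n ω))
          Filter.atTop ≤ -mu := by
  classical
  set C : ∀ n : ℕ, Ω n → Prop := fun n ω =>
    (mu : EReal) < llrE (1 / (n : ℝ)) (p n ω) (q n ω) with hC
  set mass : ℕ → ℝ := fun n => ∑ ω ∈ Finset.univ.filter (C n), p n ω with hmass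
  have hmu' : ¬ Tendsto mass atTop (nhds 0) := hmu
  set M : ℝ := max mu 0 + 1 with hM
  have hM0 : 0 < M := by
    have := le_max_right mu 0
    simp only [hM]; linarith
  have hMmu : mu ≤ M := by
    have := le_max_left mu 0
    simp only [hM]; linarith
  set T : ∀ n : ℕ, Ω n → ℝ := fun n ω =>
    if C n ω then 1 else Real.exp (-((n:ℝ)*M)) with hT
  have hexp_le_one : ∀ n : ℕ, Real.exp (-((n:ℝ)*M)) ≤ 1 := by
    intro n
    rw [Real.exp_le_one_iff]
    have : (0:ℝ) ≤ (n:ℝ) * M := by positivity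
    linarith
  have hTmem : ∀ n ω, T n ω ∈ Set.Icc (0:ℝ) 1 := by
    intro n ω
    simp only [hT]
    by_cases h : C n ω
    · rw [if_pos h]; exact ⟨zero_le_one, le_refl 1⟩
    · rw [if_neg h]; exact ⟨(Real.exp_pos _).le, hexp_le_one n⟩
  refine ⟨T, hTmem, ?_, ?_⟩
  · -- liminf α < 1
    obtain ⟨ε, hε, hfreq⟩ : ∃ ε > 0, ∃ᶠ n in atTop, ε ≤ mass n := by
      by_contra hcon
      push_neg at hcon
      apply hmu'
      rw [Metric.tendsto_atTop]
      intro ε hε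
      have h1 := hcon ε hε
      rw [eventually_atTop] at h1
      obtain ⟨N, hN⟩ := h1
      refine ⟨N, fun n hn => ?_⟩
      have h1 : mass n < ε := hN n hn
      have h2 : 0 ≤ mass n := Finset.sum_nonneg (fun ω _ => hp0 n ω)
      simpa [Real.dist_eq, abs_of_nonneg h2] using h1
    have hα_le : ∀ n, (∑ ω, (1 - T n ω) * p n ω) ≤ 1 - mass n := by
      intro n
      have h1 : ∀ ω : Ω n, (1 - T n ω) * p n ω ≤ (if C n ω then 0 else p n ω) := by
        intro ω
        simp only [hT]
        by_cases h : C n ω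
        · rw [if_pos h, if_pos h]; simp
        · rw [if_neg h, if_neg h]
          nlinarith [Real.exp_nonneg (-((n:ℝ)*M)), hp0 n ω, hexp_le_one n]
      calc (∑ ω, (1 - T n ω) * p n ω)
          ≤ ∑ ω, (if C n ω then 0 else p n ω) := Finset.sum_le_sum (fun ω _ => h1 ω)
        _ = ∑ ω ∈ Finset.univ.filter (fun ω => ¬ C n ω), p n ω := by
            rw [Finset.sum_filter]
            refine Finset.sum_congr rfl (fun ω _ => ?_)
            by_cases h : C n ω
            · rw [if_pos h, if_neg (not_not_intro h)]
            · rw [if_neg h, if_pos h]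
        _ = 1 - mass n := by
            have h2 := Finset.sum_filter_add_sum_filter_not Finset.univ (C n) (p n)
            rw [hp1 n] at h2
            simp only [hmass]
            linarith
    have hfr2 : ∃ᶠ n in atTop, (∑ ω, (1 - T n ω) * p n ω) ≤ 1 - ε :=
      hfreq.mono (fun n hn => le_trans (hα_le n) (by linarith))
    have hbdd : IsBoundedUnder (· ≥ ·) atTop (fun n : ℕ => ∑ ω, (1 - T n ω) * p n ω) :=
      isBoundedUnder_of ⟨0, fun n => Finset.sum_nonneg (fun ω _ => by
        have h3 := hTmem n ω
        nlinarith [hp0 n ω, h3.2])⟩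
    calc liminf (fun n : ℕ => ∑ ω, (1 - T n ω) * p n ω) atTop ≤ 1 - ε :=
          liminf_le_of_frequently_le hfr2 hbdd
      _ < 1 := by linarith
  · -- limsup ≤ -mu
    set β : ℕ → ℝ := fun n => ∑ ω, T n ω * q n ω with hβ
    have hβpos : ∀ n : ℕ, Real.exp (-((n:ℝ)*M)) ≤ β n := by
      intro n
      calc Real.exp (-((n:ℝ)*M)) = ∑ ω, Real.exp (-((n:ℝ)*M)) * q n ω := by
            rw [← Finset.mul_sum, hq1 n, mul_one]
        _ ≤ ∑ ω, T n ω * q n ω := by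
            refine Finset.sum_le_sum (fun ω _ => mul_le_mul_of_nonneg_right ?_ (hq0 n ω))
            simp only [hT]
            by_cases h : C n ω
            · rw [if_pos h]; exact hexp_le_one n
            · rw [if_neg h]
    have hβle : ∀ n : ℕ, 1 ≤ n → β n ≤ 2 * Real.exp (-((n:ℝ)*mu)) := by
      intro n hn
      have hstep : ∀ ω : Ω n, T n ω * q n ω ≤
          (if C n ω then q n ω else 0) + Real.exp (-((n:ℝ)*M)) * q n ω := by
        intro ω
        simp only [hT]
        by_cases h : C n ω
        · rw [if_pos h, if_pos h, one_mul]
          nlinarith [Real.exp_nonneg (-((n:ℝ)*M)), hq0 n ω]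
        · rw [if_neg h, if_neg h, zero_add]
      have h1 : β n ≤ (∑ ω ∈ Finset.univ.filter (C n), q n ω) + Real.exp (-((n:ℝ)*M)) := by
        calc β n ≤ ∑ ω, ((if C n ω then q n ω else 0) + Real.exp (-((n:ℝ)*M)) * q n ω) :=
              Finset.sum_le_sum (fun ω _ => hstep ω)
          _ = (∑ ω, if C n ω then q n ω else 0) + Real.exp (-((n:ℝ)*M)) * ∑ ω, q n ω := by
              rw [Finset.sum_add_distrib, Finset.mul_sum]
          _ = _ := by rw [hq1 n, mul_one, Finset.sum_filter]
      have h2 : (∑ ω ∈ Finset.univ.filter (C n), q n ω) ≤ Real.exp (-((n:ℝ)*mu)) := by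
        rcases le_or_gt mu 0 with hmu0 | hmu0
        · calc (∑ ω ∈ Finset.univ.filter (C n), q n ω)
              ≤ ∑ ω, q n ω := Finset.sum_le_sum_of_subset_of_nonneg
                (Finset.filter_subset _ _) (fun ω _ _ => hq0 n ω)
            _ = 1 := hq1 n
            _ ≤ Real.exp (-((n:ℝ)*mu)) :=
                Real.one_le_exp (by nlinarith [Nat.cast_nonneg (α := ℝ) n])
        · calc (∑ ω ∈ Finset.univ.filter (C n), q n ω)
              ≤ ∑ ω ∈ Finset.univ.filter (C n), Real.exp (-((n:ℝ)*mu)) * p n ω := by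
                refine Finset.sum_le_sum (fun ω hω => ?_)
                rw [Finset.mem_filter] at hω
                exact llr_ge_exp hn hmu0 (hp0 n ω) (hq0 n ω) hω.2
            _ = Real.exp (-((n:ℝ)*mu)) * mass n := by rw [hmass, Finset.mul_sum]
            _ ≤ Real.exp (-((n:ℝ)*mu)) * 1 := by
                refine mul_le_mul_of_nonneg_left ?_ (Real.exp_nonneg _)
                calc mass n ≤ ∑ ω, p n ω := Finset.sum_le_sum_of_subset_of_nonneg
                      (Finset.filter_subset _ _) (fun ω _ _ => hp0 n ω)
                  _ = 1 := hp1 n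
            _ = Real.exp (-((n:ℝ)*mu)) := mul_one _
      have h3 : Real.exp (-((n:ℝ)*M)) ≤ Real.exp (-((n:ℝ)*mu)) :=
        Real.exp_le_exp.2 (by nlinarith [Nat.cast_nonneg (α := ℝ) n])
      linarith
    have hflb : ∀ n : ℕ, -M ≤ (1/(n:ℝ)) * Real.log (β n) := by
      intro n
      rcases Nat.eq_zero_or_pos n with h0 | h1
      · subst h0; simp; linarith
      · have hn0 : (0:ℝ) < (n:ℝ) := by exact_mod_cast h1
        have hl : -((n:ℝ)*M) ≤ Real.log (β n) := by
          have h4 := Real.log_le_log (Real.exp_pos _) (hβpos n)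
          rwa [Real.log_exp] at h4
        have h5 := mul_le_mul_of_nonneg_left hl (le_of_lt (one_div_pos.2 hn0))
        calc -M = (1/(n:ℝ)) * (-((n:ℝ)*M)) := by field_simp
          _ ≤ (1/(n:ℝ)) * Real.log (β n) := h5
    have hfub : ∀ n : ℕ, 1 ≤ n → (1/(n:ℝ)) * Real.log (β n) ≤ (1/(n:ℝ)) * Real.log 2 - mu := by
      intro n hn
      have hn0 : (0:ℝ) < (n:ℝ) := by exact_mod_cast hn
      have hb0 : 0 < β n := lt_of_lt_of_le (Real.exp_pos _) (hβpos n)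
      have hl : Real.log (β n) ≤ Real.log 2 + (-((n:ℝ)*mu)) := by
        have h4 := Real.log_le_log hb0 (hβle n hn)
        rwa [Real.log_mul two_ne_zero (Real.exp_ne_zero _), Real.log_exp] at h4
      have h5 := mul_le_mul_of_nonneg_left hl (le_of_lt (one_div_pos.2 hn0))
      calc (1/(n:ℝ)) * Real.log (β n) ≤ (1/(n:ℝ)) * (Real.log 2 + (-((n:ℝ)*mu))) := h5
        _ = (1/(n:ℝ)) * Real.log 2 - mu := by field_simp; ring
    have hg : Tendsto (fun n : ℕ => (1/(n:ℝ)) * Real.log 2 - mu) atTop (nhds (-mu)) := by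
      have h1 := (tendsto_one_div_atTop_nhds_zero_nat.mul_const (Real.log 2)).sub_const mu
      simpa using h1
    have hcob : IsCoboundedUnder (· ≤ ·) atTop (fun n : ℕ => (1/(n:ℝ)) * Real.log (β n)) :=
      IsBoundedUnder.isCoboundedUnder_le (isBoundedUnder_of ⟨-M, fun n => hflb n⟩)
    calc limsup (fun n : ℕ => (1/(n:ℝ)) * Real.log (β n)) atTop
        ≤ limsup (fun n : ℕ => (1/(n:ℝ)) * Real.log 2 - mu) atTop :=
          limsup_le_limsup (eventually_atTop.2 ⟨1, hfub⟩) hcob hg.isBoundedUnder_le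
      _ = -mu := hg.limsup_eq

lemma converse_aux (Ω : ℕ → Type) [∀ n, Fintype (Ω n)]
    (p q : ∀ n : ℕ, Ω n → ℝ)
    (hp0 : ∀ n ω, 0 ≤ p n ω) (hp1 : ∀ n, ∑ ω, p n ω = 1)
    (hq0 : ∀ n ω, 0 ≤ q n ω) (hq1 : ∀ n, ∑ ω, q n ω = 1)
    (lam mu : ℝ)
    (hlam : ∃ T : ∀ n : ℕ, Ω n → ℝ,
        (∀ n ω, T n ω ∈ Set.Icc (0 : ℝ) 1) ∧
        Filter.liminf (fun n : ℕ => ∑ ω, (1 - T n ω) * p n ω) Filter.atTop < 1 ∧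
        Filter.limsup (fun n : ℕ => (1 / (n : ℝ)) * Real.log (∑ ω, T n ω * q n ω))
          Filter.atTop ≤ -lam)
    (hmu : Filter.Tendsto (fun n : ℕ => ∑ ω ∈ Finset.univ.filter
          (fun ω : Ω n => (mu : EReal) < llrE (1 / (n : ℝ)) (p n ω) (q n ω)), p n ω)
        Filter.atTop (nhds 0)) :
    lam ≤ mu := by
  classical
  by_contra hc
  push_neg at hc   -- mu < lam
  obtain ⟨T, hTmem, hα, hβlim⟩ := hlam
  set C : ∀ n : ℕ, Ω n → Prop := fun n ω =>
    (mu : EReal) < llrE (1 / (n : ℝ)) (p n ω) (q n ω) with hC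
  set mass : ℕ → ℝ := fun n => ∑ ω ∈ Finset.univ.filter (C n), p n ω with hmass
  have hmu' : Tendsto mass atTop (nhds 0) := hmu
  set ν : ℝ := (lam + mu)/2 with hν
  have hν1 : mu < ν := by rw [hν]; linarith
  have hν2 : ν < lam := by rw [hν]; linarith
  set β : ℕ → ℝ := fun n => ∑ ω, T n ω * q n ω with hβ
  set α : ℕ → ℝ := fun n => ∑ ω, (1 - T n ω) * p n ω with hα'
  have hβ0 : ∀ n, 0 ≤ β n := fun n => Finset.sum_nonneg (fun ω _ =>
    mul_nonneg (hTmem n ω).1 (hq0 n ω))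
  have hβ1 : ∀ n, β n ≤ 1 := by
    intro n
    calc β n ≤ ∑ ω, q n ω := Finset.sum_le_sum (fun ω _ => by
          nlinarith [(hTmem n ω).2, hq0 n ω, (hTmem n ω).1])
      _ = 1 := hq1 n
  have hfle : ∀ n : ℕ, (1/(n:ℝ)) * Real.log (β n) ≤ 0 := by
    intro n
    have h1 : Real.log (β n) ≤ 0 := Real.log_nonpos (hβ0 n) (hβ1 n)
    have h2 : (0:ℝ) ≤ 1/(n:ℝ) := by positivity
    nlinarith
  have hbound : IsBoundedUnder (· ≤ ·) atTop
      (fun n : ℕ => (1/(n:ℝ)) * Real.log (β n)) :=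
    isBoundedUnder_of ⟨0, fun n => hfle n⟩
  have hev : ∀ᶠ n : ℕ in atTop, (1/(n:ℝ)) * Real.log (β n) < -ν :=
    eventually_lt_of_limsup_lt (lt_of_le_of_lt hβlim (by linarith)) hbound
  have hβev : ∀ᶠ n : ℕ in atTop, β n ≤ Real.exp (-((n:ℝ)*ν)) := by
    filter_upwards [hev, eventually_ge_atTop 1] with n hn hn1
    have hn0 : (0:ℝ) < (n:ℝ) := by exact_mod_cast hn1
    have hlog : Real.log (β n) < -((n:ℝ)*ν) := by
      have h4 := mul_lt_mul_of_pos_left hn hn0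
      calc Real.log (β n) = (n:ℝ) * ((1/(n:ℝ)) * Real.log (β n)) := by field_simp
        _ < (n:ℝ) * (-ν) := h4
        _ = -((n:ℝ)*ν) := by ring
    rcases eq_or_lt_of_le (hβ0 n) with h | h
    · rw [← h]; exact (Real.exp_pos _).le
    · calc β n = Real.exp (Real.log (β n)) := (Real.exp_log h).symm
        _ ≤ Real.exp (-((n:ℝ)*ν)) := Real.exp_le_exp.2 hlog.le
  have hub : ∀ᶠ n : ℕ in atTop, (1 - α n) ≤ mass n + Real.exp (-((n:ℝ)*(ν - mu))) := by
    filter_upwards [hβev, eventually_ge_atTop 1] with n hβn hn1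
    have key : ∑ ω, T n ω * p n ω ≤ mass n + Real.exp ((n:ℝ)*mu) * β n := by
      have hpt : ∀ ω : Ω n, T n ω * p n ω ≤
          (if C n ω then p n ω else 0) + Real.exp ((n:ℝ)*mu) * (T n ω * q n ω) := by
        intro ω
        by_cases h : C n ω
        · rw [if_pos h]
          have h1 : T n ω * p n ω ≤ p n ω := by
            nlinarith [(hTmem n ω).2, hp0 n ω, (hTmem n ω).1]
          have h2 : 0 ≤ Real.exp ((n:ℝ)*mu) * (T n ω * q n ω) := by
            have := mul_nonneg (hTmem n ω).1 (hq0 n ω)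
            positivity
          linarith
        · rw [if_neg h, zero_add]
          have h1 : p n ω ≤ Real.exp ((n:ℝ)*mu) * q n ω :=
            llr_le_exp hn1 (hp0 n ω) (hq0 n ω) h
          calc T n ω * p n ω ≤ T n ω * (Real.exp ((n:ℝ)*mu) * q n ω) :=
                mul_le_mul_of_nonneg_left h1 (hTmem n ω).1
            _ = Real.exp ((n:ℝ)*mu) * (T n ω * q n ω) := by ring
      calc ∑ ω, T n ω * p n ω
          ≤ ∑ ω, ((if C n ω then p n ω else 0) + Real.exp ((n:ℝ)*mu) * (T n ω * q n ω)) :=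
            Finset.sum_le_sum (fun ω _ => hpt ω)
        _ = (∑ ω, if C n ω then p n ω else 0) + Real.exp ((n:ℝ)*mu) * β n := by
            rw [Finset.sum_add_distrib, Finset.mul_sum]
        _ = mass n + Real.exp ((n:ℝ)*mu) * β n := by
            congr 1
            exact (Finset.sum_filter (C n) (p n)).symm
    have h1α : 1 - α n = ∑ ω, T n ω * p n ω := by
      have h4 : α n = (∑ ω, p n ω) - ∑ ω, T n ω * p n ω := by
        rw [← Finset.sum_sub_distrib]
        exact Finset.sum_congr rfl (fun ω _ => by ring)
      rw [h4, hp1 n]; ring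
    have h2 : Real.exp ((n:ℝ)*mu) * β n ≤ Real.exp (-((n:ℝ)*(ν-mu))) := by
      calc Real.exp ((n:ℝ)*mu) * β n ≤ Real.exp ((n:ℝ)*mu) * Real.exp (-((n:ℝ)*ν)) :=
            mul_le_mul_of_nonneg_left hβn (Real.exp_nonneg _)
        _ = Real.exp ((n:ℝ)*mu + -((n:ℝ)*ν)) := (Real.exp_add _ _).symm
        _ = Real.exp (-((n:ℝ)*(ν-mu))) := by ring_nf
    rw [h1α]
    linarith
  have htend : Tendsto (fun n : ℕ => mass n + Real.exp (-((n:ℝ)*(ν - mu)))) atTop (nhds 0) := by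
    have h1 := hmu'.add (exp_neg_nat_tendsto (ν - mu) (by linarith))
    simpa using h1
  have hα1 : ∀ n, α n ≤ 1 := by
    intro n
    calc α n ≤ ∑ ω, p n ω := Finset.sum_le_sum (fun ω _ => by
          nlinarith [(hTmem n ω).1, hp0 n ω, (hTmem n ω).2])
      _ = 1 := hp1 n
  have hsq : Tendsto (fun n : ℕ => 1 - α n) atTop (nhds 0) :=
    squeeze_zero' (Eventually.of_forall (fun n => by have := hα1 n; linarith)) hub htend
  have hαtend : Tendsto α atTop (nhds 1) := by
    have h1 := tendsto_const_nhds (x := (1:ℝ)) (f := atTop (α := ℕ)) |>.sub hsq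
    simpa using h1
  have h2 := hαtend.liminf_eq
  rw [hα'] at h2
  rw [h2] at hα
  exact lt_irrefl _ hα


/-- **Classical information-spectrum identity (J2 of Lemma 4).** `B†(p⃗‖q⃗) = D_upper(p⃗‖q⃗)`
for arbitrary sequences of probability distributions on finite sets. -/
theorem stmt_7 (Ω : ℕ → Type) [∀ n, Fintype (Ω n)]
    (p q : ∀ n : ℕ, Ω n → ℝ)
    (hp0 : ∀ n ω, 0 ≤ p n ω) (hp1 : ∀ n, ∑ ω, p n ω = 1)
    (hq0 : ∀ n ω, 0 ≤ q n ω) (hq1 : ∀ n, ∑ ω, q n ω = 1) :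
    sSup {lam : ℝ | ∃ T : ∀ n : ℕ, Ω n → ℝ,
        (∀ n ω, T n ω ∈ Set.Icc (0 : ℝ) 1) ∧
        Filter.liminf (fun n : ℕ => ∑ ω, (1 - T n ω) * p n ω) Filter.atTop < 1 ∧
        Filter.limsup (fun n : ℕ => (1 / (n : ℝ)) * Real.log (∑ ω, T n ω * q n ω))
          Filter.atTop ≤ -lam}
    = sInf {lam : ℝ | Filter.Tendsto
        (fun n : ℕ => ∑ ω ∈ Finset.univ.filter
          (fun ω : Ω n => (lam : EReal) < llrE (1 / (n : ℝ)) (p n ω) (q n ω)), p n ω)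
        Filter.atTop (nhds 0)} := by
  classical
  set A := {lam : ℝ | ∃ T : ∀ n : ℕ, Ω n → ℝ,
        (∀ n ω, T n ω ∈ Set.Icc (0 : ℝ) 1) ∧
        Filter.liminf (fun n : ℕ => ∑ ω, (1 - T n ω) * p n ω) Filter.atTop < 1 ∧
        Filter.limsup (fun n : ℕ => (1 / (n : ℝ)) * Real.log (∑ ω, T n ω * q n ω))
          Filter.atTop ≤ -lam} with hA
  set B := {lam : ℝ | Filter.Tendsto
        (fun n : ℕ => ∑ ω ∈ Finset.univ.filter
          (fun ω : Ω n => (lam : EReal) < llrE (1 / (n : ℝ)) (p n ω) (q n ω)), p n ω)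
        Filter.atTop (nhds 0)} with hB
  have h0A : (0:ℝ) ∈ A := by
    rw [hA]
    refine ⟨fun n ω => 1, fun n ω => ⟨zero_le_one, le_refl 1⟩, ?_, ?_⟩
    · have h1 : (fun n : ℕ => ∑ ω : Ω n, (1 - (1:ℝ)) * p n ω) = fun n : ℕ => (0:ℝ) := by
        funext n; simp
      rw [h1]
      have := Filter.Tendsto.liminf_eq (tendsto_const_nhds
        (x := (0:ℝ)) (f := (atTop : Filter ℕ)))
      rw [this]
      exact zero_lt_one
    · have h1 : (fun n : ℕ => (1 / (n : ℝ)) * Real.log (∑ ω : Ω n, (1:ℝ) * q n ω))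
          = fun n : ℕ => (0:ℝ) := by
        funext n
        simp [hq1 n]
      rw [h1]
      have := Filter.Tendsto.limsup_eq (tendsto_const_nhds
        (x := (0:ℝ)) (f := (atTop : Filter ℕ)))
      rw [this]
      simp
  have hAne : A.Nonempty := ⟨0, h0A⟩
  have hconv : ∀ lam ∈ A, ∀ mu ∈ B, lam ≤ mu := by
    intro lam hlam mu hmu
    exact converse_aux Ω p q hp0 hp1 hq0 hq1 lam mu hlam hmu
  have hach : ∀ mu : ℝ, mu ∉ B → mu ∈ A := by
    intro mu hmu
    exact achieve Ω p q hp0 hp1 hq0 hq1 mu hmu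
  by_cases hBne : B.Nonempty
  · obtain ⟨b0, hb0⟩ := hBne
    have hBbd : BddBelow B := ⟨0, fun mu hmu => hconv 0 h0A mu hmu⟩
    have hAbd : BddAbove A := ⟨b0, fun lam hlam => hconv lam hlam b0 hb0⟩
    apply le_antisymm
    · exact csSup_le hAne (fun lam hlam => le_csInf ⟨b0, hb0⟩
        (fun mu hmu => hconv lam hlam mu hmu))
    · by_contra h
      push_neg at h
      set c : ℝ := (sSup A + sInf B)/2 with hc
      have hc1 : sSup A < c := by rw [hc]; linarith
      have hc2 : c < sInf B := by rw [hc]; linarith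
      have hcB : c ∉ B := fun hcB => absurd (csInf_le hBbd hcB) (not_le.2 hc2)
      have hcA : c ∈ A := hach c hcB
      exact absurd (le_csSup hAbd hcA) (not_le.2 hc1)
  · have hBempty : B = ∅ := Set.not_nonempty_iff_eq_empty.1 hBne
    rw [hBempty, Real.sInf_empty]
    have hnb : ¬ BddAbove A := by
      rintro ⟨b, hb⟩
      have h1 : b + 1 ∈ A := hach (b+1) (by rw [hBempty]; exact Set.notMem_empty _)
      have := hb h1
      linarith
    exact Real.sSup_of_not_bddAbove hnb
end

section
/- Lemma 6 (maximum of Σ p_i (log p_i)² over the simplex): For k ≥ 2, the maximum of Σ_{i=1}^{k} p_i (log p_i)² over all probability vectors (p_1, …, p_k) (p_i ≥ 0, Σ p_i = 1, with the convention 0·(log 0)² = 0) equals (log k)² if k ≥ 3, and equals ((1−√(1−4/e²))/2)·(log((1−√(1−4/e²))/2))² + ((1+√(1−4/e²))/2)·(log((1+√(1−4/e²))/2))² if k = 2. -/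
open scoped BigOperators

open Real

noncomputable def s12f (x : ℝ) : ℝ := x * Real.log x ^ 2

lemma s12f_contOn : ContinuousOn s12f (Set.Ici (0:ℝ)) := by
  have h : ContinuousOn (fun x : ℝ => (2 * (Real.sqrt x * Real.log (Real.sqrt x))) ^ 2)
      (Set.Ici (0:ℝ)) :=
    ((continuous_const.mul (Real.continuous_mul_log.comp Real.continuous_sqrt)).pow 2).continuousOn
  refine ContinuousOn.congr h ?_
  intro x hx
  have hx' : (0:ℝ) ≤ x := hx
  have hs : Real.sqrt x ^ 2 = x := Real.sq_sqrt hx'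
  have hl : Real.log x = 2 * Real.log (Real.sqrt x) := by
    conv_lhs => rw [← hs]
    rw [Real.log_pow]; push_cast; ring
  simp only [s12f, hl]
  nlinarith [Real.sqrt_nonneg x, Real.sq_sqrt hx']

lemma s12f_hasDeriv {x : ℝ} (hx : 0 < x) :
    HasDerivAt s12f (Real.log x ^ 2 + 2 * Real.log x) x := by
  have h1 : HasDerivAt (fun y : ℝ => Real.log y ^ 2) (2 * Real.log x ^ 1 * x⁻¹) x :=
    (Real.hasDerivAt_log hx.ne').pow 2
  have h2 : HasDerivAt (fun y : ℝ => y * Real.log y ^ 2)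
      (1 * Real.log x ^ 2 + x * (2 * Real.log x ^ 1 * x⁻¹)) x :=
    (hasDerivAt_id x).mul h1
  have h3 : 1 * Real.log x ^ 2 + x * (2 * Real.log x ^ 1 * x⁻¹)
      = Real.log x ^ 2 + 2 * Real.log x := by
    field_simp
  rw [h3] at h2
  exact h2

lemma s12f_strictConvexOn :
    StrictConvexOn ℝ (Set.Icc (Real.exp 1)⁻¹ 1) s12f := by
  have hsub : Set.Icc (Real.exp 1)⁻¹ 1 ⊆ Set.Ici (0:ℝ) := by
    intro y hy
    exact le_trans (by positivity) hy.1
  refine strictConvexOn_of_deriv2_pos (convex_Icc _ _) (s12f_contOn.mono hsub) ?_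
  intro x hx
  rw [interior_Icc] at hx
  have hxe : (Real.exp 1)⁻¹ < x := hx.1
  have hx0 : 0 < x := lt_trans (by positivity) hxe
  have hev : deriv s12f =ᶠ[nhds x] fun y => Real.log y ^ 2 + 2 * Real.log y := by
    filter_upwards [eventually_gt_nhds hx0] with y hy
    exact (s12f_hasDeriv hy).deriv
  have h2 : deriv^[2] s12f x = deriv (deriv s12f) x := by
    simp [Function.iterate_succ, Function.iterate_one]
  rw [h2, hev.deriv_eq]
  have hg : HasDerivAt (fun y => Real.log y ^ 2 + 2 * Real.log y)
      (2 * Real.log x ^ 1 * x⁻¹ + 2 * x⁻¹) x :=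
    ((Real.hasDerivAt_log hx0.ne').pow 2).add ((Real.hasDerivAt_log hx0.ne').const_mul 2)
  rw [hg.deriv]
  have hlog : -1 < Real.log x := by
    have := Real.log_lt_log (by positivity) hxe
    rwa [Real.log_inv, Real.log_exp] at this
  have hxi : 0 < x⁻¹ := by positivity
  nlinarith

lemma s12f_gain {x : ℝ} (hx : 0 < x) (hx1 : x ≤ 1) :
    ∃ u : ℝ, 0 < u ∧ u ≤ x ∧ s12f x < s12f (x - u) + s12f u := by
  obtain ⟨L, hL⟩ : ∃ L : ℝ, L = -Real.log (x/2) := ⟨_, rfl⟩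
  have hx2 : 0 < x/2 := by linarith
  have hLpos : 0 < L := by
    have : Real.log (x/2) < 0 := Real.log_neg hx2 (by linarith)
    linarith
  obtain ⟨C, hC⟩ : ∃ C : ℝ, C = L^2 + 2*L := ⟨_, rfl⟩
  have hCpos : 0 < C := by rw [hC]; positivity
  have hbound : ∀ y ∈ Set.Icc (x/2) x, |Real.log y ^ 2 + 2 * Real.log y| ≤ C := by
    intro y hy
    have hy0 : 0 < y := lt_of_lt_of_le hx2 hy.1
    have h1 : Real.log (x/2) ≤ Real.log y := Real.log_le_log hx2 hy.1
    have h2 : Real.log y ≤ 0 := Real.log_nonpos hy0.le (le_trans hy.2 hx1)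
    have hsq : Real.log y ^2 ≤ L^2 := by nlinarith
    rw [abs_le]; constructor <;> nlinarith
  obtain ⟨u, hu⟩ : ∃ u : ℝ, u = min (x/2) (Real.exp (-(Real.sqrt C + 1))) := ⟨_, rfl⟩
  have hu0 : 0 < u := hu ▸ lt_min hx2 (Real.exp_pos _)
  have hux : u ≤ x/2 := hu ▸ min_le_left _ _
  have hulog : Real.log u ≤ -(Real.sqrt C + 1) := by
    rw [hu]
    calc Real.log (min (x/2) (Real.exp (-(Real.sqrt C + 1))))
        ≤ Real.log (Real.exp (-(Real.sqrt C + 1))) :=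
          Real.log_le_log (hu ▸ hu0) (min_le_right _ _)
      _ = -(Real.sqrt C + 1) := Real.log_exp _
  have husq : C < Real.log u ^ 2 := by
    have hs : 0 ≤ Real.sqrt C := Real.sqrt_nonneg _
    have h2 : Real.sqrt C ^ 2 = C := Real.sq_sqrt hCpos.le
    nlinarith
  have hab : x - u < x := by linarith
  obtain ⟨c, hc, hceq⟩ := exists_hasDerivAt_eq_slope s12f
      (fun y => Real.log y ^ 2 + 2 * Real.log y) hab
      (s12f_contOn.mono (by intro y hy; simp at hy ⊢; linarith [hy.1]))
      (fun y hy => s12f_hasDeriv (by simp at hy; linarith [hy.1]))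
  have hcC : |Real.log c ^ 2 + 2 * Real.log c| ≤ C := by
    apply hbound
    constructor
    · linarith [hc.1]
    · linarith [hc.2]
  have hslope : s12f x - s12f (x - u) ≤ C * u := by
    have h0 := hceq
    have hxne : x - (x - u) = u := by ring
    rw [hxne] at h0
    have h1 : s12f x - s12f (x - u) = (Real.log c ^ 2 + 2 * Real.log c) * u := by
      field_simp at h0 ⊢; linarith [h0]
    rw [h1]
    have := (abs_le.mp hcC).2
    nlinarith
  have hfu : C * u < s12f u := by
    have h : s12f u = u * Real.log u ^ 2 := rfl
    nlinarith
  exact ⟨u, hu0, by linarith, by linarith⟩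

lemma s12_sum_split {k : ℕ} (g : Fin k → ℝ) {i j : Fin k} (hij : i ≠ j) :
    ∑ m, g m = g i + g j + ∑ m ∈ (Finset.univ.erase j).erase i, g m := by
  have hj : j ∈ (Finset.univ : Finset (Fin k)) := Finset.mem_univ j
  have hi : i ∈ Finset.univ.erase j := Finset.mem_erase.mpr ⟨hij, Finset.mem_univ i⟩
  rw [← Finset.add_sum_erase _ g hj, ← Finset.add_sum_erase _ g hi]
  ring

lemma s12_exchange {k : ℕ} {q : Fin k → ℝ} (hq : q ∈ stdSimplex ℝ (Fin k))
    (hmax : ∀ p ∈ stdSimplex ℝ (Fin k), (∑ m, s12f (p m)) ≤ ∑ m, s12f (q m))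
    {i j : Fin k} (hij : i ≠ j) {t : ℝ} (h1 : -q i ≤ t) (h2 : t ≤ q j) :
    s12f (q i + t) + s12f (q j - t) ≤ s12f (q i) + s12f (q j) := by
  set p : Fin k → ℝ := Function.update (Function.update q i (q i + t)) j (q j - t) with hp
  have hpj : p j = q j - t := by simp [hp]
  have hpi : p i = q i + t := by
    simp [hp, Function.update_of_ne hij]
  have hpm : ∀ m, m ≠ i → m ≠ j → p m = q m := by
    intro m hmi hmj
    simp [hp, Function.update_of_ne hmj, Function.update_of_ne hmi]
  have hpmem : p ∈ stdSimplex ℝ (Fin k) := by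
    constructor
    · intro m
      rcases eq_or_ne m i with rfl | hmi
      · rw [hpi]; linarith
      rcases eq_or_ne m j with rfl | hmj
      · rw [hpj]; linarith
      · rw [hpm m hmi hmj]; exact hq.1 m
    · rw [s12_sum_split p hij, hpi, hpj,
        Finset.sum_congr rfl (fun m hm => hpm m (Finset.mem_erase.mp hm).1
          (Finset.mem_erase.mp (Finset.mem_erase.mp hm).2).1)]
      have := hq.2
      rw [s12_sum_split q hij] at this
      linarith
  have hle := hmax p hpmem
  rw [s12_sum_split (fun m => s12f (p m)) hij, s12_sum_split (fun m => s12f (q m)) hij] at hle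
  simp only [hpi, hpj] at hle
  have hrest : ∑ m ∈ (Finset.univ.erase j).erase i, s12f (p m)
      = ∑ m ∈ (Finset.univ.erase j).erase i, s12f (q m) :=
    Finset.sum_congr rfl (fun m hm => by
      rw [hpm m (Finset.mem_erase.mp hm).1
        (Finset.mem_erase.mp (Finset.mem_erase.mp hm).2).1])
  linarith

lemma s12_critical {k : ℕ} {q : Fin k → ℝ} (hq : q ∈ stdSimplex ℝ (Fin k))
    (hmax : ∀ p ∈ stdSimplex ℝ (Fin k), (∑ m, s12f (p m)) ≤ ∑ m, s12f (q m))
    {i j : Fin k} (hij : i ≠ j) (hi : 0 < q i) (hj : 0 < q j) :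
    Real.log (q i) ^ 2 + 2 * Real.log (q i) = Real.log (q j) ^ 2 + 2 * Real.log (q j) := by
  have hloc : IsLocalMax (fun t => s12f (q i + t) + s12f (q j - t)) 0 := by
    filter_upwards [Ioo_mem_nhds (by linarith : -q i < (0:ℝ)) hj] with t ht
    have := s12_exchange hq hmax hij (le_of_lt ht.1) (le_of_lt ht.2)
    simpa using this
  have d1 : HasDerivAt (fun t : ℝ => s12f (q i + t))
      ((Real.log (q i) ^ 2 + 2 * Real.log (q i)) * 1) 0 := by
    have inner : HasDerivAt (fun t : ℝ => q i + t) 1 0 := (hasDerivAt_id 0).const_add (q i)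
    have houter : HasDerivAt s12f (Real.log (q i) ^ 2 + 2 * Real.log (q i)) ((fun t : ℝ => q i + t) 0) := by
      simpa using s12f_hasDeriv hi
    exact houter.comp 0 inner
  have d2 : HasDerivAt (fun t : ℝ => s12f (q j - t))
      ((Real.log (q j) ^ 2 + 2 * Real.log (q j)) * (-1)) 0 := by
    have inner : HasDerivAt (fun t : ℝ => q j - t) (-1) 0 := (hasDerivAt_id 0).const_sub (q j)
    have houter : HasDerivAt s12f (Real.log (q j) ^ 2 + 2 * Real.log (q j)) ((fun t : ℝ => q j - t) 0) := by
      simpa using s12f_hasDeriv hj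
    exact houter.comp 0 inner
  have := hloc.hasDerivAt_eq_zero (d1.add d2)
  linarith

lemma s12_le_one {k : ℕ} {q : Fin k → ℝ} (hq : q ∈ stdSimplex ℝ (Fin k)) (m : Fin k) :
    q m ≤ 1 := by
  rw [← hq.2]
  exact Finset.single_le_sum (fun i _ => hq.1 i) (Finset.mem_univ m)

lemma s12_support {k : ℕ} (hk : 2 ≤ k) {q : Fin k → ℝ} (hq : q ∈ stdSimplex ℝ (Fin k))
    (hmax : ∀ p ∈ stdSimplex ℝ (Fin k), (∑ m, s12f (p m)) ≤ ∑ m, s12f (q m)) :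
    ∀ m, 0 < q m := by
  intro m
  rcases (hq.1 m).lt_or_eq with h | h
  · exact h
  exfalso
  have hex : ∃ i, 0 < q i := by
    by_contra hcon
    push_neg at hcon
    have : ∑ i, q i ≤ 0 := Finset.sum_nonpos (fun i _ => hcon i)
    rw [hq.2] at this; linarith
  obtain ⟨i, hi⟩ := hex
  have him : i ≠ m := by rintro rfl; rw [← h] at hi; exact lt_irrefl _ hi
  obtain ⟨u, hu0, hux, hgain⟩ := s12f_gain hi (s12_le_one hq i)
  have hexch := s12_exchange hq hmax him (t := -u) (by linarith) (by rw [← h]; linarith)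
  have h0 : s12f (q m) = 0 := by rw [← h]; simp [s12f]
  rw [h0] at hexch
  have e1 : q i + -u = q i - u := by ring
  have e2 : q m - -u = u := by rw [← h]; ring
  rw [e1, e2] at hexch
  linarith

lemma s12_pair {k : ℕ} {q : Fin k → ℝ} (hq : q ∈ stdSimplex ℝ (Fin k))
    (hmax : ∀ p ∈ stdSimplex ℝ (Fin k), (∑ m, s12f (p m)) ≤ ∑ m, s12f (q m))
    {i j : Fin k} (hij : i ≠ j) (heq : q i = q j) (hgt : (Real.exp 1)⁻¹ < q i) :
    False := by
  have hsum2 : q i + q j ≤ 1 := by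
    rw [← hq.2, ← Finset.sum_pair hij]
    exact Finset.sum_le_sum_of_subset_of_nonneg (Finset.subset_univ _)
      (fun m _ _ => hq.1 m)
  have hepos : (0:ℝ) < (Real.exp 1)⁻¹ := by positivity
  have he1 : (Real.exp 1)⁻¹ ≤ 1 := by
    rw [inv_le_one_iff₀]; right; linarith [Real.exp_one_gt_d9]
  have ht : (0:ℝ) < q i - (Real.exp 1)⁻¹ := by linarith
  have hexch := s12_exchange hq hmax hij (t := q i - (Real.exp 1)⁻¹)
    (by linarith) (by rw [← heq]; linarith)
  have hmem1 : (Real.exp 1)⁻¹ ∈ Set.Icc (Real.exp 1)⁻¹ (1:ℝ) := ⟨le_refl _, he1⟩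
  have hmem2 : q i + (q i - (Real.exp 1)⁻¹) ∈ Set.Icc (Real.exp 1)⁻¹ (1:ℝ) := by
    constructor <;> [linarith; linarith [heq ▸ hsum2]]
  have hne : (Real.exp 1)⁻¹ ≠ q i + (q i - (Real.exp 1)⁻¹) := by intro hcon; nlinarith
  have hsc := s12f_strictConvexOn.2 hmem1 hmem2 hne (by norm_num : (0:ℝ) < 1/2)
    (by norm_num : (0:ℝ) < 1/2) (by norm_num)
  have hmid : (1/2 : ℝ) • (Real.exp 1)⁻¹ + (1/2 : ℝ) • (q i + (q i - (Real.exp 1)⁻¹)) = q i := by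
    simp only [smul_eq_mul]; ring
  rw [hmid] at hsc
  simp only [smul_eq_mul] at hsc
  have e3 : q j - (q i - (Real.exp 1)⁻¹) = (Real.exp 1)⁻¹ := by rw [← heq]; ring
  rw [e3, ← heq] at hexch
  linarith

lemma s12_exp18 : Real.exp 1.8 < 6.19 := by
  have h5 : Real.exp 1.8 ^ (5:ℕ) = Real.exp 9 := by
    rw [← Real.exp_nat_mul]; norm_num
  have h9 : Real.exp 9 = Real.exp 1 ^ (9:ℕ) := by
    rw [← Real.exp_nat_mul]; norm_num
  have he : Real.exp 1 < 2.7182818286 := Real.exp_one_lt_d9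
  have hb : Real.exp 1 ^ (9:ℕ) < 2.7182818286 ^ (9:ℕ) :=
    pow_lt_pow_left₀ he (Real.exp_pos 1).le (by norm_num)
  have hc : (2.7182818286 : ℝ) ^ (9:ℕ) < 6.19 ^ (5:ℕ) := by norm_num
  have : Real.exp 1.8 ^ (5:ℕ) < 6.19 ^ (5:ℕ) := by
    rw [h5, h9]; linarith
  exact lt_of_pow_lt_pow_left₀ 5 (by norm_num) this

lemma s12_sqrt_bounds :
    0.6772 ≤ Real.sqrt (1 - 4 / Real.exp 1 ^ 2) ∧
    Real.sqrt (1 - 4 / Real.exp 1 ^ 2) ≤ 0.6774 := by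
  have he1 : 2.7182818283 < Real.exp 1 := Real.exp_one_gt_d9
  have he2 : Real.exp 1 < 2.7182818286 := Real.exp_one_lt_d9
  have hepos : (0:ℝ) < Real.exp 1 := Real.exp_pos 1
  have hD1 : (0.6772:ℝ)^2 ≤ 1 - 4 / Real.exp 1 ^ 2 := by
    have h4 : 4 / Real.exp 1 ^ 2 ≤ 1 - (0.6772:ℝ)^2 := by
      rw [div_le_iff₀ (by positivity)]; nlinarith
    linarith
  have hD2 : 1 - 4 / Real.exp 1 ^ 2 ≤ (0.6774:ℝ)^2 := by
    have h4 : 1 - (0.6774:ℝ)^2 ≤ 4 / Real.exp 1 ^ 2 := by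
      rw [le_div_iff₀ (by positivity)]; nlinarith
    linarith
  constructor
  · have := Real.sqrt_le_sqrt hD1
    rwa [Real.sqrt_sq (by norm_num : (0:ℝ) ≤ 0.6772)] at this
  · have := Real.sqrt_le_sqrt hD2
    rwa [Real.sqrt_sq (by norm_num : (0:ℝ) ≤ 0.6774)] at this

lemma s12_log2_le :
    Real.log 2 ^ 2 ≤
      ((1 - Real.sqrt (1 - 4 / Real.exp 1 ^ 2)) / 2) *
          Real.log ((1 - Real.sqrt (1 - 4 / Real.exp 1 ^ 2)) / 2) ^ 2
        + ((1 + Real.sqrt (1 - 4 / Real.exp 1 ^ 2)) / 2) *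
          Real.log ((1 + Real.sqrt (1 - 4 / Real.exp 1 ^ 2)) / 2) ^ 2 := by
  obtain ⟨hr1, hr2⟩ := s12_sqrt_bounds
  obtain ⟨r, hr⟩ : ∃ r : ℝ, r = Real.sqrt (1 - 4 / Real.exp 1 ^ 2) := ⟨_, rfl⟩
  rw [← hr] at hr1 hr2 ⊢
  have ha1 : (0.1613 : ℝ) ≤ (1 - r)/2 := by linarith
  have ha2 : (1 - r)/2 ≤ (0.1614 : ℝ) := by linarith
  have hapos : (0:ℝ) < (1 - r)/2 := by linarith
  -- log a < -1.8
  have hexp18 : Real.exp 1.8 < 6.19 := s12_exp18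
  have haexp : (1 - r)/2 < Real.exp (-1.8) := by
    rw [Real.exp_neg, inv_eq_one_div, lt_div_iff₀ (Real.exp_pos _)]
    nlinarith [Real.exp_pos (1.8:ℝ)]
  have hloga : Real.log ((1 - r)/2) < -1.8 := by
    have := Real.log_lt_log hapos haexp
    rwa [Real.log_exp] at this
  have hsq : (3.24:ℝ) < Real.log ((1 - r)/2) ^ 2 := by nlinarith
  have hbpos : (0:ℝ) ≤ (1 + r)/2 := by
    have : (0:ℝ) ≤ r := hr ▸ Real.sqrt_nonneg _
    linarith
  have hterm2 : (0:ℝ) ≤ ((1 + r)/2) * Real.log ((1 + r)/2) ^ 2 := by positivity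
  have hlog2 : Real.log 2 < 0.6931471808 := Real.log_two_lt_d9
  have hlog2' : (0:ℝ) < Real.log 2 := Real.log_pos (by norm_num)
  nlinarith

lemma s12_classify {k : ℕ} (hk : 2 ≤ k) {q : Fin k → ℝ} (hq : q ∈ stdSimplex ℝ (Fin k))
    (hmax : ∀ p ∈ stdSimplex ℝ (Fin k), (∑ m, s12f (p m)) ≤ ∑ m, s12f (q m)) :
    (∑ m, s12f (q m)) ≤
      (if 3 ≤ k then Real.log k ^ 2
       else
        ((1 - Real.sqrt (1 - 4 / Real.exp 1 ^ 2)) / 2) *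
            Real.log ((1 - Real.sqrt (1 - 4 / Real.exp 1 ^ 2)) / 2) ^ 2
          + ((1 + Real.sqrt (1 - 4 / Real.exp 1 ^ 2)) / 2) *
            Real.log ((1 + Real.sqrt (1 - 4 / Real.exp 1 ^ 2)) / 2) ^ 2) := by
  have hpos : ∀ m, 0 < q m := s12_support hk hq hmax
  have i0 : Fin k := ⟨0, by omega⟩
  obtain ⟨s, hs⟩ : ∃ s : ℝ, s = |Real.log (q i0) + 1| := ⟨_, rfl⟩
  have hs0 : 0 ≤ s := hs ▸ abs_nonneg _
  have hdichot : ∀ m, Real.log (q m) + 1 = s ∨ Real.log (q m) + 1 = -s := by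
    intro m
    have hsq : (Real.log (q m) + 1)^2 = s^2 := by
      rcases eq_or_ne m i0 with rfl | hne
      · rw [hs, sq_abs]
      · have hcrit := s12_critical hq hmax hne (hpos m) (hpos i0)
        rw [hs, sq_abs]
        nlinarith
    have hfact : (Real.log (q m) + 1 - s) * (Real.log (q m) + 1 + s) = 0 := by nlinarith
    rcases mul_eq_zero.mp hfact with h | h
    · left; linarith
    · right; linarith
  have hqform : ∀ m, q m = Real.exp (s - 1) ∨ q m = Real.exp (-s - 1) := by
    intro m
    rcases hdichot m with h | h
    · left; rw [← Real.exp_log (hpos m)]; congr 1; linarith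
    · right; rw [← Real.exp_log (hpos m)]; congr 1; linarith
  rcases eq_or_lt_of_le hs0 with hseq | hspos
  · -- s = 0 : all coordinates equal exp(-1), sum = k/e = 1 impossible
    exfalso
    have hall : ∀ m, q m = Real.exp (-1) := by
      intro m
      rcases hqform m with h | h
      · rw [h]; congr 1; linarith
      · rw [h]; congr 1; linarith
    have hsum : ∑ m, q m = (k:ℝ) * Real.exp (-1) := by
      rw [Finset.sum_congr rfl (fun m _ => hall m)]
      simp [Finset.card_univ, mul_comm]
    rw [hq.2] at hsum
    have hek : (k:ℝ) = Real.exp 1 := by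
      have hwe : Real.exp (-1) = (Real.exp 1)⁻¹ := Real.exp_neg 1
      rw [hwe] at hsum
      field_simp at hsum
      linarith [hsum]
    have he1 : 2.7182818283 < Real.exp 1 := Real.exp_one_gt_d9
    have he2 : Real.exp 1 < 2.7182818286 := Real.exp_one_lt_d9
    rcases Nat.lt_or_ge k 3 with h3 | h3
    · interval_cases k
      · rw [show ((2:ℕ):ℝ) = 2 by norm_num] at hek; linarith
    · have : (3:ℝ) ≤ (k:ℝ) := by exact_mod_cast h3
      linarith
  · -- s > 0
    obtain ⟨B, hB⟩ : ∃ B : Finset (Fin k),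
        B = Finset.univ.filter (fun m => q m = Real.exp (s - 1)) := ⟨_, rfl⟩
    have hbgta : Real.exp (-s - 1) < Real.exp (s - 1) := Real.exp_lt_exp.mpr (by linarith)
    have hbgt : (Real.exp 1)⁻¹ < Real.exp (s - 1) := by
      rw [← Real.exp_neg]
      exact Real.exp_lt_exp.mpr (by linarith)
    have hcard : B.card ≤ 1 := by
      by_contra hc
      push_neg at hc
      obtain ⟨i, hi, j, hj, hij⟩ := Finset.one_lt_card.mp hc
      rw [hB, Finset.mem_filter] at hi hj
      exact s12_pair hq hmax hij (hi.2.trans hj.2.symm) (hi.2 ▸ hbgt)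
    have hnotB : ∀ m, m ∉ B → q m = Real.exp (-s - 1) := by
      intro m hm
      rw [hB, Finset.mem_filter] at hm
      push_neg at hm
      rcases hqform m with h | h
      · exact absurd h (hm (Finset.mem_univ m))
      · exact h
    have hinB : ∀ m, m ∈ B → q m = Real.exp (s - 1) := by
      intro m hm; rw [hB, Finset.mem_filter] at hm; exact hm.2
    -- sums split
    have hsplit : ∀ g : ℝ → ℝ, ∑ m, g (q m) =
        (B.card : ℝ) * g (Real.exp (s - 1)) + ((k:ℝ) - B.card) * g (Real.exp (-s - 1)) := by
      intro g
      have h1 : ∑ m ∈ B, g (q m) = (B.card : ℝ) * g (Real.exp (s - 1)) := by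
        rw [Finset.sum_congr rfl (fun m hm => by rw [hinB m hm])]
        simp [mul_comm]
      have h2 : ∑ m ∈ Bᶜ, g (q m) = ((k:ℝ) - B.card) * g (Real.exp (-s - 1)) := by
        have hle : B.card ≤ k := le_trans hcard (by omega)
        rw [Finset.sum_congr rfl (fun m hm => by rw [hnotB m (Finset.mem_compl.mp hm)]),
          Finset.sum_const, nsmul_eq_mul, Finset.card_compl,
          Fintype.card_fin, Nat.cast_sub hle]
      rw [← Finset.sum_add_sum_compl B (fun m => g (q m)), h1, h2]
    have hsumq := hsplit id
    simp only [id] at hsumq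
    rw [hq.2] at hsumq
    have hsumf := hsplit s12f
    interval_cases hBc : B.card
    · -- B empty : uniform
      simp only [Nat.cast_zero, zero_mul, sub_zero, zero_add] at hsumq hsumf
      have hk0 : (0:ℝ) < (k:ℝ) := by positivity
      have ha : Real.exp (-s - 1) = (k:ℝ)⁻¹ := by
        field_simp at hsumq ⊢
        linarith
      have hval : ∑ m, s12f (q m) = Real.log k ^ 2 := by
        rw [hsumf, ha]
        simp only [s12f, Real.log_inv]
        field_simp
      rw [hval]
      by_cases h3 : 3 ≤ k
      · rw [if_pos h3]
      · rw [if_neg h3]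
        have hk2 : k = 2 := by omega
        subst hk2
        exact_mod_cast s12_log2_le
    · -- B has one element
      simp only [Nat.cast_one, one_mul] at hsumq hsumf
      by_cases h3 : 3 ≤ k
      · exfalso
        -- exp s + (k-1) exp(-s) = e ≥ 2 sqrt(k-1) ≥ 2 sqrt 2 > e
        have hmul : Real.exp s + ((k:ℝ) - 1) * Real.exp (-s) = Real.exp 1 := by
          have h1 : Real.exp (s - 1) * Real.exp 1 = Real.exp s := by
            rw [← Real.exp_add]; ring_nf
          have h2 : Real.exp (-s - 1) * Real.exp 1 = Real.exp (-s) := by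
            rw [← Real.exp_add]; ring_nf
          have := congrArg (· * Real.exp 1) hsumq
          nlinarith [this]
        have hx : (0:ℝ) < Real.exp s := Real.exp_pos s
        have hxy : Real.exp s * Real.exp (-s) = 1 := by
          rw [← Real.exp_add]; simp
        have hk1 : (2:ℝ) ≤ (k:ℝ) - 1 := by
          have : (3:ℝ) ≤ (k:ℝ) := by exact_mod_cast h3
          linarith
        have hsq : Real.sqrt ((k:ℝ)-1) ^ 2 = (k:ℝ)-1 := Real.sq_sqrt (by linarith)
        have hsq2 : Real.sqrt 2 ^ 2 = 2 := Real.sq_sqrt (by norm_num)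
        have hmono : Real.sqrt 2 ≤ Real.sqrt ((k:ℝ)-1) := Real.sqrt_le_sqrt hk1
        have hamgm : 2 * Real.sqrt ((k:ℝ)-1) ≤ Real.exp s + ((k:ℝ)-1) * Real.exp (-s) := by
          nlinarith [sq_nonneg (Real.exp s - Real.sqrt ((k:ℝ)-1)), Real.exp_pos (-s),
            Real.sqrt_nonneg ((k:ℝ)-1)]
        have he2 : Real.exp 1 < 2.7182818286 := Real.exp_one_lt_d9
        have hgt : Real.exp 1 < 2 * Real.sqrt 2 := by
          nlinarith [Real.sqrt_nonneg 2]
        nlinarith [hmul, hamgm, hmono]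
      · -- k = 2
        have hk2 : k = 2 := by omega
        subst hk2
        rw [if_neg h3]
        obtain ⟨a, hA⟩ : ∃ a : ℝ, a = Real.exp (-s - 1) := ⟨_, rfl⟩
        obtain ⟨b, hBv⟩ : ∃ b : ℝ, b = Real.exp (s - 1) := ⟨_, rfl⟩
        rw [← hA, ← hBv] at hsumq hsumf hbgta
        have hab1 : b + a = 1 := by
          push_cast at hsumq
          linarith
        have habe : a * b = (Real.exp 1 * Real.exp 1)⁻¹ := by
          rw [hA, hBv, ← Real.exp_add, ← Real.exp_add, ← Real.exp_neg]
          congr 1; ring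
        have hapos : 0 < a := hA ▸ Real.exp_pos _
        have hsqr : (b - a)^2 = 1 - 4 / Real.exp 1 ^ 2 := by
          linear_combination (b + a + 1) * hab1 - 4 * habe
        have hba : 0 ≤ b - a := by linarith [hbgta]
        have hrr : Real.sqrt (1 - 4 / Real.exp 1 ^ 2) = b - a := by
          rw [← hsqr, Real.sqrt_sq hba]
        have haa : (1 - Real.sqrt (1 - 4 / Real.exp 1 ^ 2)) / 2 = a := by
          rw [hrr]; linarith
        have hbb : (1 + Real.sqrt (1 - 4 / Real.exp 1 ^ 2)) / 2 = b := by
          rw [hrr]; linarith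
        have hvv : (∑ m, s12f (q m)) = a * Real.log a ^ 2 + b * Real.log b ^ 2 := by
          rw [hsumf]
          simp only [s12f]
          push_cast
          ring
        rw [hvv, haa, hbb]

/-- **Lemma 6 (maximum of `Σ pᵢ (log pᵢ)²` over the simplex).** For `k ≥ 2` the maximum
equals `(log k)²` if `k ≥ 3`, and the indicated two-point value if `k = 2`. The summand
`p (log p)²` is `0` when `p = 0` since `Real.log 0 = 0`. -/
theorem stmt_12 (k : ℕ) (hk : 2 ≤ k) :
    IsGreatest
      {x : ℝ | ∃ p : Fin k → ℝ, (∀ i, 0 ≤ p i) ∧ (∑ i, p i = 1) ∧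
        x = ∑ i, p i * Real.log (p i) ^ 2}
      (if 3 ≤ k then Real.log k ^ 2
       else
        ((1 - Real.sqrt (1 - 4 / Real.exp 1 ^ 2)) / 2) *
            Real.log ((1 - Real.sqrt (1 - 4 / Real.exp 1 ^ 2)) / 2) ^ 2
          + ((1 + Real.sqrt (1 - 4 / Real.exp 1 ^ 2)) / 2) *
            Real.log ((1 + Real.sqrt (1 - 4 / Real.exp 1 ^ 2)) / 2) ^ 2) := by
  constructor
  · -- membership
    by_cases h3 : 3 ≤ k
    · rw [if_pos h3]
      refine ⟨fun _ => (k:ℝ)⁻¹, fun i => by positivity, ?_, ?_⟩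
      · rw [Finset.sum_const, Finset.card_univ, Fintype.card_fin, nsmul_eq_mul]
        field_simp
      · rw [Finset.sum_const, Finset.card_univ, Fintype.card_fin, nsmul_eq_mul,
          Real.log_inv]
        have hk0 : (k:ℝ) ≠ 0 := by positivity
        field_simp
    · rw [if_neg h3]
      have hk2 : k = 2 := by omega
      subst hk2
      obtain ⟨r, hr⟩ : ∃ r : ℝ, r = Real.sqrt (1 - 4 / Real.exp 1 ^ 2) := ⟨_, rfl⟩
      have hr0 : 0 ≤ r := hr ▸ Real.sqrt_nonneg _
      have hr1 : r ≤ 1 := by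
        rw [hr]
        calc Real.sqrt (1 - 4 / Real.exp 1 ^ 2) ≤ Real.sqrt 1 := by
              apply Real.sqrt_le_sqrt
              have : (0:ℝ) ≤ 4 / Real.exp 1 ^ 2 := by positivity
              linarith
          _ = 1 := Real.sqrt_one
      refine ⟨![(1 - r)/2, (1 + r)/2], ?_, ?_, ?_⟩
      · intro i
        fin_cases i <;> simp <;> linarith
      · rw [Fin.sum_univ_two]
        simp only [Matrix.cons_val_zero, Matrix.cons_val_one, Matrix.head_cons]
        ring
      · rw [Fin.sum_univ_two]
        simp only [Matrix.cons_val_zero, Matrix.cons_val_one, Matrix.head_cons]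
        rw [← hr]
  · -- upper bound
    rintro x ⟨p, hp0, hp1, rfl⟩
    have hpmem : p ∈ stdSimplex ℝ (Fin k) := ⟨hp0, hp1⟩
    have hcont : ContinuousOn (fun y : Fin k → ℝ => ∑ m, s12f (y m))
        (stdSimplex ℝ (Fin k)) := by
      apply continuousOn_finset_sum
      intro m _
      exact s12f_contOn.comp (continuous_apply m).continuousOn
        (fun y hy => hy.1 m)
    obtain ⟨q, hqmem, hqmax⟩ :=
      (isCompact_stdSimplex ℝ (Fin k)).exists_isMaxOn ⟨p, hpmem⟩ hcont
    have hmax : ∀ p' ∈ stdSimplex ℝ (Fin k), (∑ m, s12f (p' m)) ≤ ∑ m, s12f (q m) :=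
      fun p' hp' => hqmax hp'
    calc ∑ i, p i * Real.log (p i) ^ 2 = ∑ m, s12f (p m) := rfl
      _ ≤ ∑ m, s12f (q m) := hmax p hpmem
      _ ≤ _ := s12_classify hk hqmem hmax
end

section
/- Lemma 7: Let ρ be a density matrix on ℂ^k (k = dim of the Hilbert space) and M = {M_i} any PVM on ℂ^k. Then ρ ≤ k · ℰ_M(ρ) in the Loewner order, i.e., k · Σ_i M_i ρ M_i − ρ is positive semidefinite. -/
open scoped BigOperators Classical ComplexOrder
open Matrix Filter

noncomputable def matFun {d : Type*} [Fintype d] [DecidableEq d] (f : ℝ → ℝ)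
    (A : Matrix d d ℂ) : Matrix d d ℂ :=
  if hA : A.IsHermitian then hA.cfc f else 0

noncomputable def matLog {d : Type*} [Fintype d] [DecidableEq d]
    (A : Matrix d d ℂ) : Matrix d d ℂ :=
  matFun Real.log A

noncomputable def tensPow {k : ℕ} (ρ : Matrix (Fin k) (Fin k) ℂ) (n : ℕ) :
    Matrix (Fin n → Fin k) (Fin n → Fin k) ℂ :=
  fun x y => ∏ i, ρ (x i) (y i)

structure IsPVM {d ι : Type*} [Fintype d] [DecidableEq d] [Fintype ι]
    (E : ι → Matrix d d ℂ) : Prop where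
  herm : ∀ i, (E i).IsHermitian
  idem : ∀ i, E i * E i = E i
  ne_zero : ∀ i, E i ≠ 0
  orth : ∀ i j, i ≠ j → E i * E j = 0
  sum_one : ∑ i, E i = 1

noncomputable def pvmWidth {d ι : Type*} [Fintype d] [DecidableEq d] [Fintype ι]
    (E : ι → Matrix d d ℂ) : ℕ :=
  Finset.univ.sup fun i => (E i).rank

def Refines {d ι κ : Type*} [Fintype d] [DecidableEq d] [Fintype ι] [Fintype κ]
    (M : κ → Matrix d d ℂ) (E : ι → Matrix d d ℂ) : Prop :=
  ∃ f : κ → ι, ∀ i, E i = ∑ j ∈ Finset.univ.filter (fun j => f j = i), M j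

def IsTest {d : Type*} [Fintype d] [DecidableEq d] (A : Matrix d d ℂ) : Prop :=
  A.PosSemidef ∧ (1 - A).PosSemidef

noncomputable def pinch {d ι : Type*} [Fintype d] [DecidableEq d] [Fintype ι]
    (E : ι → Matrix d d ℂ) (A : Matrix d d ℂ) : Matrix d d ℂ :=
  ∑ i, E i * A * E i

/-- Quantum relative entropy `D(ρ‖σ) = Tr ρ (log ρ - log σ)`. -/
noncomputable def qRelEnt {d : Type*} [Fintype d] [DecidableEq d]
    (ρ σ : Matrix d d ℂ) : ℝ :=
  (Matrix.trace (ρ * (matLog ρ - matLog σ))).re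

private lemma sum_dotProduct' {ι : Type*} [Fintype ι] {d : Type*} [Fintype d]
    (f : ι → d → ℂ) (w : d → ℂ) :
    (∑ i, f i) ⬝ᵥ w = ∑ i, f i ⬝ᵥ w := by
  simp only [dotProduct, Finset.sum_apply, Finset.sum_mul]
  exact Finset.sum_comm

private lemma dotProduct_sum' {ι : Type*} [Fintype ι] {d : Type*} [Fintype d]
    (w : d → ℂ) (f : ι → d → ℂ) :
    w ⬝ᵥ (∑ i, f i) = ∑ i, w ⬝ᵥ f i := by
  simp only [dotProduct, Finset.sum_apply, Finset.mul_sum]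
  exact Finset.sum_comm

private lemma sum_mulVec' {ι : Type*} [Fintype ι] {d : Type*} [Fintype d]
    (f : ι → Matrix d d ℂ) (x : d → ℂ) :
    (∑ i, f i) *ᵥ x = ∑ i, (f i) *ᵥ x := by
  ext a
  simp only [mulVec, dotProduct, Finset.sum_apply, Matrix.sum_apply, Finset.sum_mul]
  exact Finset.sum_comm

private lemma mulVec_sum' {ι : Type*} [Fintype ι] {d : Type*} [Fintype d]
    (B : Matrix d d ℂ) (f : ι → d → ℂ) :
    B *ᵥ (∑ i, f i) = ∑ i, B *ᵥ f i := by
  ext a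
  simp only [mulVec, dotProduct, Finset.sum_apply, Finset.mul_sum]
  exact Finset.sum_comm

private lemma star_quad {d : Type*} [Fintype d] {A : Matrix d d ℂ}
    (hA : A.IsHermitian) (x : d → ℂ) :
    (starRingEnd ℂ) (star x ⬝ᵥ (A *ᵥ x)) = star x ⬝ᵥ (A *ᵥ x) := by
  calc (starRingEnd ℂ) (star x ⬝ᵥ (A *ᵥ x))
      = star (star x ⬝ᵥ (A *ᵥ x)) := rfl
    _ = star (A *ᵥ x) ⬝ᵥ star (star x) := (star_dotProduct_star _ _).symm
    _ = (star x ᵥ* Aᴴ) ⬝ᵥ x := by rw [star_star, star_mulVec]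
    _ = star x ⬝ᵥ (Aᴴ *ᵥ x) := (dotProduct_mulVec _ _ _).symm
    _ = star x ⬝ᵥ (A *ᵥ x) := by rw [hA.eq]

private lemma quad_herm_mul {d : Type*} [Fintype d] {H A : Matrix d d ℂ} (hH : H.IsHermitian)
    (x : d → ℂ) :
    star x ⬝ᵥ ((H * A * H) *ᵥ x) = star (H *ᵥ x) ⬝ᵥ (A *ᵥ (H *ᵥ x)) := by
  rw [star_mulVec, hH.eq, dotProduct_mulVec, mulVec_mulVec, dotProduct_mulVec,
    vecMul_vecMul, Matrix.mul_assoc]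

private lemma trace_re_ge_one {d : Type*} [Fintype d] [DecidableEq d]
    {A : Matrix d d ℂ} (hH : A.IsHermitian) (hI : A * A = A) (hne : A ≠ 0) :
    1 ≤ A.trace.re := by
  set U : Matrix d d ℂ := (hH.eigenvectorUnitary : Matrix d d ℂ) with hU
  have hsU : star U * U = 1 := Unitary.coe_star_mul_self _
  have hUs : U * star U = 1 := Unitary.coe_mul_star_self _
  have hD : star U * A * U = diagonal ((RCLike.ofReal ∘ hH.eigenvalues : d → ℂ)) := by
    conv_lhs => rw [hH.spectral_theorem, Unitary.conjStarAlgAut_apply, ← hU]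
    rw [show star U * (U * diagonal ((RCLike.ofReal ∘ hH.eigenvalues : d → ℂ)) * star U) * U
      = (star U * U) * diagonal ((RCLike.ofReal ∘ hH.eigenvalues : d → ℂ)) * (star U * U) by
        noncomm_ring, hsU, one_mul, mul_one]
  have hDD : diagonal ((RCLike.ofReal ∘ hH.eigenvalues : d → ℂ)) *
        diagonal ((RCLike.ofReal ∘ hH.eigenvalues : d → ℂ))
      = diagonal ((RCLike.ofReal ∘ hH.eigenvalues : d → ℂ)) := by
    rw [← hD]
    have h2 : (star U * A * U) * (star U * A * U) = star U * (A * (U * star U) * A) * U := by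
      noncomm_ring
    rw [h2, hUs, mul_one, hI]
  have h01 : ∀ i, hH.eigenvalues i = 0 ∨ hH.eigenvalues i = 1 := by
    intro i
    have h := congr_fun (congr_fun hDD i) i
    rw [diagonal_mul_diagonal] at h
    simp only [diagonal_apply_eq, Function.comp_apply, Pi.mul_apply] at h
    have hr : hH.eigenvalues i * hH.eigenvalues i = hH.eigenvalues i := by
      exact_mod_cast h
    rcases mul_eq_zero.mp (show hH.eigenvalues i * (hH.eigenvalues i - 1) = 0 by
      rw [mul_sub, hr]; ring) with h' | h'
    · exact Or.inl h'
    · exact Or.inr (by linarith [sub_eq_zero.mp h'])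
  have hev : hH.eigenvalues ≠ 0 := by
    contrapose! hne
    have h := hH.spectral_theorem
    rwa [hne, Pi.comp_zero, RCLike.ofReal_zero,
      (by rfl : Function.const d (0 : ℂ) = fun _ => 0), diagonal_zero, map_zero] at h
  obtain ⟨i0, hi0⟩ := Function.ne_iff.mp hev
  have hi1 : hH.eigenvalues i0 = 1 := (h01 i0).resolve_left hi0
  have htr : A.trace = ∑ i, (hH.eigenvalues i : ℂ) := by
    conv_lhs => rw [hH.spectral_theorem, Unitary.conjStarAlgAut_apply]
    rw [trace_mul_cycle, ← hU, hsU, one_mul, trace_diagonal]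
    simp
  have htrre : A.trace.re = ∑ i, hH.eigenvalues i := by
    rw [htr, Complex.re_sum]
    simp
  rw [htrre]
  calc (1 : ℝ) = hH.eigenvalues i0 := hi1.symm
    _ ≤ ∑ i, hH.eigenvalues i :=
      Finset.single_le_sum (fun i _ => by rcases h01 i with h | h <;> simp [h])
        (Finset.mem_univ i0)

/-- **Lemma 7.** For any density matrix `ρ` on `ℂ^k` and any PVM `M` on `ℂ^k`,
`ρ ≤ k • ℰ_M(ρ)` in the Loewner order. -/
theorem stmt_13 (k : ℕ) (ρ : Matrix (Fin k) (Fin k) ℂ)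
    (hρ : ρ.PosSemidef) (hρ1 : ρ.trace = 1)
    (ι : Type) [Fintype ι] (M : ι → Matrix (Fin k) (Fin k) ℂ) (hM : IsPVM M) :
    ((k : ℂ) • pinch M ρ - ρ).PosSemidef := by
  classical
  have hPSDterm : ∀ i, (M i * ρ * M i).PosSemidef := by
    intro i
    have h := hρ.conjTranspose_mul_mul_same (B := M i)
    rwa [(hM.herm i).eq] at h
  have hPpsd : (pinch M ρ).PosSemidef := by
    show (∑ i, M i * ρ * M i).PosSemidef
    exact Finset.sum_induction _ _ (fun a b ha hb => ha.add hb) Matrix.PosSemidef.zero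
      (fun i _ => hPSDterm i)
  have hHerm : ((k : ℂ) • pinch M ρ - ρ).IsHermitian := by
    have h1 : ((k : ℂ) • pinch M ρ).IsHermitian := by
      have h2 := hPpsd.isHermitian
      unfold Matrix.IsHermitian at h2 ⊢
      rw [conjTranspose_smul, h2, star_natCast]
    exact h1.sub hρ.isHermitian
  refine Matrix.PosSemidef.of_dotProduct_mulVec_nonneg hHerm fun x => ?_
  open MatrixOrder in
  set b := CFC.sqrt ρ with hbdef
  have hb : b.PosSemidef := by open MatrixOrder in exact (CFC.sqrt_nonneg ρ).posSemidef
  have hbb : b * b = ρ := by open MatrixOrder in exact CFC.sqrt_mul_sqrt_self ρ hρ.nonneg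
  have hρ11 : ρ = b * 1 * b := by rw [mul_one, hbb]
  set w : ι → Fin k → ℂ := fun i => b *ᵥ ((M i) *ᵥ x) with hw
  set nn : ι → ℝ := fun i => (star (w i) ⬝ᵥ (w i)).re with hnn
  have hterm : ∀ i, star x ⬝ᵥ ((M i * ρ * M i) *ᵥ x) = star (w i) ⬝ᵥ (w i) := by
    intro i
    rw [quad_herm_mul (hM.herm i) x]
    rw [hρ11, quad_herm_mul hb.isHermitian, one_mulVec]
  set W : Fin k → ℂ := b *ᵥ x with hWdef
  have hWsum : W = ∑ i, w i := by
    have hx : (∑ i, (M i) *ᵥ x) = x := by rw [← sum_mulVec', hM.sum_one, one_mulVec]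
    rw [hWdef, ← hx, mulVec_sum']
  have hρq : star x ⬝ᵥ (ρ *ᵥ x) = star W ⬝ᵥ W := by
    rw [hρ11, quad_herm_mul hb.isHermitian, one_mulVec]
  have hnn0 : ∀ i, 0 ≤ nn i := fun i =>
    (Complex.nonneg_iff.mp (dotProduct_star_self_nonneg (w i))).1
  have hcross : ∀ u v : Fin k → ℂ, (star u ⬝ᵥ v).re + (star v ⬝ᵥ u).re
      ≤ (star u ⬝ᵥ u).re + (star v ⬝ᵥ v).re := by
    intro u v
    have h0 : 0 ≤ (star (u - v) ⬝ᵥ (u - v)).re :=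
      (Complex.nonneg_iff.mp (dotProduct_star_self_nonneg (u - v))).1
    have hexp : star (u - v) ⬝ᵥ (u - v)
        = star u ⬝ᵥ u - star u ⬝ᵥ v - star v ⬝ᵥ u + star v ⬝ᵥ v := by
      rw [star_sub, sub_dotProduct, dotProduct_sub, dotProduct_sub]; ring
    rw [hexp] at h0
    simp only [Complex.add_re, Complex.sub_re] at h0
    linarith
  have hWW : (star W ⬝ᵥ W).re = ∑ i, ∑ j, (star (w i) ⬝ᵥ (w j)).re := by
    rw [hWsum, star_sum, sum_dotProduct', Complex.re_sum]
    refine Finset.sum_congr rfl fun i _ => ?_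
    rw [dotProduct_sum', Complex.re_sum]
  set m : ℕ := Fintype.card ι with hm
  have hWle : (star W ⬝ᵥ W).re ≤ (m : ℝ) * ∑ i, nn i := by
    have h2 : 2 * (star W ⬝ᵥ W).re ≤ 2 * ((m : ℝ) * ∑ i, nn i) := by
      calc 2 * (star W ⬝ᵥ W).re
          = ∑ i, ∑ j, ((star (w i) ⬝ᵥ (w j)).re + (star (w j) ⬝ᵥ (w i)).re) := by
            simp only [Finset.sum_add_distrib]
            rw [hWW, two_mul]
            congr 1
            exact Finset.sum_comm
        _ ≤ ∑ i, ∑ j, (nn i + nn j) := by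
            refine Finset.sum_le_sum fun i _ => Finset.sum_le_sum fun j _ => hcross (w i) (w j)
        _ = 2 * ((m : ℝ) * ∑ i, nn i) := by
            simp only [Finset.sum_add_distrib, Finset.sum_const, Finset.card_univ,
              nsmul_eq_mul, ← hm, ← Finset.mul_sum]
            ring
    linarith
  have hmk : (m : ℝ) ≤ (k : ℝ) := by
    have h1 : ∀ i, 1 ≤ (M i).trace.re := fun i =>
      trace_re_ge_one (hM.herm i) (hM.idem i) (hM.ne_zero i)
    have h2 : ∑ i, (M i).trace.re = (k : ℝ) := by
      rw [← Complex.re_sum, ← trace_sum, hM.sum_one, trace_one]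
      simp
    calc (m : ℝ) = ∑ _i : ι, (1 : ℝ) := by simp [hm]
      _ ≤ ∑ i, (M i).trace.re := Finset.sum_le_sum fun i _ => h1 i
      _ = (k : ℝ) := h2
  have hsplit : star x ⬝ᵥ (((k : ℂ) • pinch M ρ - ρ) *ᵥ x)
      = (k : ℂ) * (star x ⬝ᵥ (pinch M ρ *ᵥ x)) - star x ⬝ᵥ (ρ *ᵥ x) := by
    rw [sub_mulVec, dotProduct_sub, smul_mulVec, dotProduct_smul, smul_eq_mul]
  have hQ : star x ⬝ᵥ (pinch M ρ *ᵥ x) = ∑ i, star (w i) ⬝ᵥ (w i) := by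
    show star x ⬝ᵥ ((∑ i, M i * ρ * M i) *ᵥ x) = _
    rw [sum_mulVec', dotProduct_sum']
    exact Finset.sum_congr rfl fun i _ => hterm i
  rw [Complex.nonneg_iff]
  constructor
  · rw [hsplit, Complex.sub_re]
    have hQre : ((k : ℂ) * (star x ⬝ᵥ (pinch M ρ *ᵥ x))).re = (k : ℝ) * ∑ i, nn i := by
      rw [hQ, Complex.mul_re]
      simp [Complex.re_sum, hnn]
    rw [hQre, hρq]
    have hsum0 : 0 ≤ ∑ i, nn i := Finset.sum_nonneg fun i _ => hnn0 i
    have h3 : (star W ⬝ᵥ W).re ≤ (k : ℝ) * ∑ i, nn i :=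
      le_trans hWle (mul_le_mul_of_nonneg_right hmk hsum0)
    linarith
  · exact (Complex.conj_eq_iff_im.mp (star_quad hHerm x)).symm
end

section
/- Lemma 9 (SL-invariant operators commute with all tensor-power states): Let A be a linear operator on (ℂ^k)^{⊗n} such that A commutes with g^{⊗n} for every g ∈ SL(k, ℂ) (every k×k complex matrix with determinant 1). Then A commutes with ρ^{⊗n} for every density matrix ρ on ℂ^k. -/
/-! Writing an invertible `g` as `c • h` with `cᵏ = det g` and `det h = 1` gives
`g^{⊗n} = cⁿ • h^{⊗n}`, so `A` commutes with `g^{⊗n}` for every invertible `g`. Since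
`det (g + t • 1)` is the characteristic polynomial of `-g` at `t`, it vanishes for only
finitely many `t`, so invertible matrices are dense; commuting with `g^{⊗n}` is a closed
condition on `g`, hence it holds for every matrix, density matrices included. -/

open scoped BigOperators Classical ComplexOrder
open Matrix Filter

open Topology

theorem Matrix.dense_setOf_isUnit_det {𝕜 m : Type*} [NontriviallyNormedField 𝕜] [Fintype m]
    [DecidableEq m] : Dense {g : Matrix m m 𝕜 | IsUnit g.det} := by
  intro g
  have hroots : {t : 𝕜 | (-g).charpoly.IsRoot t}.Finite :=
    Polynomial.finite_setOfPred_isRoot (-g).charpoly_monic.ne_zero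
  have hunit : ∀ᶠ t in 𝓝[≠] (0 : 𝕜), IsUnit (g + t • (1 : Matrix m m 𝕜)).det := by
    filter_upwards [nhdsNE_le_cofinite (0 : 𝕜) hroots.eventually_cofinite_notMem] with t ht
    rwa [isUnit_iff_ne_zero, add_comm, ← sub_neg_eq_add, smul_one_eq_diagonal, ← scalar_apply,
      ← eval_charpoly]
  have hlim : Tendsto (fun t : 𝕜 => g + t • (1 : Matrix m m 𝕜)) (𝓝[≠] 0) (𝓝 g) := by
    have hcont : Continuous fun t : 𝕜 => g + t • (1 : Matrix m m 𝕜) := by fun_prop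
    simpa using (hcont.tendsto 0).mono_left nhdsWithin_le_nhds
  exact mem_closure_of_tendsto hlim hunit

lemma tensPow_smul {k : ℕ} (c : ℂ) (g : Matrix (Fin k) (Fin k) ℂ) (n : ℕ) :
    tensPow (c • g) n = c ^ n • tensPow g n := by
  ext x y
  simp [tensPow, Finset.prod_mul_distrib, Finset.prod_const]

lemma continuous_tensPow (k n : ℕ) : Continuous fun g : Matrix (Fin k) (Fin k) ℂ => tensPow g n :=
  continuous_pi fun _ => continuous_pi fun _ =>
    continuous_finsetProd _ fun _ _ => continuous_apply_apply _ _

theorem Matrix.exists_det_eq_one_smul_eq {k : ℕ} {g : Matrix (Fin k) (Fin k) ℂ}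
    (hg : IsUnit g.det) : ∃ c : ℂ, ∃ h : Matrix (Fin k) (Fin k) ℂ, h.det = 1 ∧ g = c • h := by
  rcases k.eq_zero_or_pos with rfl | hk
  · exact ⟨1, g, det_isEmpty, (one_smul ℂ g).symm⟩
  obtain ⟨c, hc⟩ := IsAlgClosed.exists_pow_nat_eq g.det hk
  have hc0 : c ≠ 0 := by
    rintro rfl
    exact hg.ne_zero (by rw [← hc, zero_pow hk.ne'])
  refine ⟨c, c⁻¹ • g, ?_, by rw [smul_smul, mul_inv_cancel₀ hc0, one_smul]⟩
  rw [det_smul, Fintype.card_fin, inv_pow, hc, inv_mul_cancel₀ hg.ne_zero]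

theorem commute_tensPow_of_forall_det_eq_one {k n : ℕ}
    {A : Matrix (Fin n → Fin k) (Fin n → Fin k) ℂ}
    (hA : ∀ g : Matrix (Fin k) (Fin k) ℂ, g.det = 1 → A * tensPow g n = tensPow g n * A)
    (g : Matrix (Fin k) (Fin k) ℂ) : A * tensPow g n = tensPow g n * A := by
  have hunit : ∀ g : Matrix (Fin k) (Fin k) ℂ, IsUnit g.det →
      A * tensPow g n = tensPow g n * A := by
    intro g hg
    obtain ⟨c, h, hdet, rfl⟩ := exists_det_eq_one_smul_eq hg
    rw [tensPow_smul, Matrix.mul_smul, Matrix.smul_mul, hA h hdet]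
  have hcont := continuous_tensPow k n
  exact congrFun (Continuous.ext_on dense_setOf_isUnit_det (continuous_const.matrix_mul hcont)
    (hcont.matrix_mul continuous_const) hunit) g

theorem stmt_15_general (k n : ℕ)
    (A : Matrix (Fin n → Fin k) (Fin n → Fin k) ℂ)
    (hA : ∀ g : Matrix (Fin k) (Fin k) ℂ, g.det = 1 → A * tensPow g n = tensPow g n * A)
    (ρ : Matrix (Fin k) (Fin k) ℂ) :
    A * tensPow ρ n = tensPow ρ n * A :=
  commute_tensPow_of_forall_det_eq_one hA ρ

/-- **Lemma 9.** If a linear operator `A` on `(ℂ^k)^{⊗n}` commutes with `g^{⊗n}` for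
every `g ∈ SL(k, ℂ)`, then `A` commutes with `ρ^{⊗n}` for every density matrix `ρ`. -/
theorem stmt_15 (k n : ℕ)
    (A : Matrix (Fin n → Fin k) (Fin n → Fin k) ℂ)
    (hA : ∀ g : Matrix (Fin k) (Fin k) ℂ, g.det = 1 → A * tensPow g n = tensPow g n * A)
    (ρ : Matrix (Fin k) (Fin k) ℂ) (hρ : ρ.PosSemidef) (hρ1 : ρ.trace = 1) :
    A * tensPow ρ n = tensPow ρ n * A :=
  stmt_15_general k n A hA ρ
end
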